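/- arXiv:math-ph/0605001 — 6 statements merged into one kernel-verified Lean document; each statement's English description precedes it below -/
import Mathlib

section
/- Let τ ∈ ℝ and n ∈ ℕ. For every real λ > τ, the function λ ↦ ∫_{−√(2(λ−τ))}^{√(2(λ−τ))} (λ − τ − x²/2)^{n+1}/(n+1)! dx is differentiable at λ and its derivative equals 2·(2(λ − τ))^{n+1/2}/(2n+1)!!. -/
open Finset intervalIntegral


noncomputable def Wint (m : ℕ) : ℝ := ∫ x in (-1:ℝ)..1, (1 - x ^ 2) ^ m

lemma Wint_zero : Wint 0 = 2 := by simp [Wint]; norm_num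

lemma Wint_rec (m : ℕ) : (2 * (m:ℝ) + 3) * Wint (m + 1) = (2 * m + 2) * Wint m := by
  have hu : ∀ x ∈ Set.uIcc (-1:ℝ) 1,
      HasDerivAt (fun x : ℝ => (1 - x ^ 2) ^ (m + 1))
        (((m:ℝ) + 1) * (1 - x ^ 2) ^ m * (-(2 * x))) x := by
    intro x _
    have h1 : HasDerivAt (fun x : ℝ => 1 - x ^ 2) (-(2 * x)) x := by
      simpa using ((hasDerivAt_pow 2 x).const_sub 1)
    have := h1.fun_pow (m + 1)
    simpa [Nat.cast_add, mul_comm, mul_assoc, mul_left_comm] using this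
  have hv : ∀ x ∈ Set.uIcc (-1:ℝ) 1, HasDerivAt (fun x : ℝ => x) 1 x :=
    fun x _ => hasDerivAt_id x
  have hu' : IntervalIntegrable (fun x : ℝ => ((m:ℝ) + 1) * (1 - x ^ 2) ^ m * (-(2 * x)))
      MeasureTheory.volume (-1) 1 := (by fun_prop : Continuous fun x : ℝ => ((m:ℝ) + 1) * (1 - x ^ 2) ^ m * (-(2 * x))).intervalIntegrable _ _
  have hv' : IntervalIntegrable (fun _ : ℝ => (1:ℝ)) MeasureTheory.volume (-1) 1 :=
    intervalIntegrable_const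
  have H := integral_mul_deriv_eq_deriv_mul hu hv hu' hv'
  simp only [mul_one] at H
  -- H : ∫ (1-x^2)^(m+1) = 0 - 0 - ∫ ((m+1)*(1-x^2)^m*(-(2x)))*x
  have key : ∫ x in (-1:ℝ)..1, ((m:ℝ) + 1) * (1 - x ^ 2) ^ m * (-(2 * x)) * x
      = -(2 * ((m:ℝ) + 1)) * (Wint m - Wint (m + 1)) := by
    have expand : ∀ x : ℝ, ((m:ℝ) + 1) * (1 - x ^ 2) ^ m * (-(2 * x)) * x
        = -(2 * ((m:ℝ) + 1)) * ((1 - x ^ 2) ^ m - (1 - x ^ 2) ^ (m + 1)) := by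
      intro x
      have : (1 - x ^ 2) ^ (m + 1) = (1 - x ^ 2) ^ m * (1 - x ^ 2) := pow_succ _ _
      rw [this]; ring
    rw [intervalIntegral.integral_congr (fun x _ => expand x),
      intervalIntegral.integral_const_mul]
    rw [intervalIntegral.integral_sub
      ((by fun_prop : Continuous fun x : ℝ => (1 - x ^ 2) ^ m).intervalIntegrable _ _)
      ((by fun_prop : Continuous fun x : ℝ => (1 - x ^ 2) ^ (m + 1)).intervalIntegrable _ _)]
    rfl
  rw [key] at H
  have : Wint (m + 1) = 0 - 0 - -(2 * ((m:ℝ) + 1)) * (Wint m - Wint (m + 1)) := by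
    simpa [Wint] using H
  linarith

lemma Wint_val (m : ℕ) :
    Wint m * ∏ j ∈ Finset.range (m + 1), (2 * (j:ℝ) + 1)
      = 2 ^ (m + 1) * (Nat.factorial m : ℝ) := by
  induction m with
  | zero => simp [Wint_zero]
  | succ m ih =>
      have hrec := Wint_rec m
      have hprod : ∏ j ∈ Finset.range (m + 2), (2 * (j:ℝ) + 1)
          = (∏ j ∈ Finset.range (m + 1), (2 * (j:ℝ) + 1)) * (2 * (m + 1 : ℝ) + 1) := by
        rw [Finset.prod_range_succ]; push_cast; ring
      have hfact : (Nat.factorial (m + 1) : ℝ) = ((m:ℝ) + 1) * (Nat.factorial m : ℝ) := by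
        push_cast [Nat.factorial_succ]; ring
      rw [hprod, hfact]
      have h3 : (2 * (m + 1 : ℝ) + 1) = 2 * (m:ℝ) + 3 := by ring
      calc Wint (m + 1) * ((∏ j ∈ Finset.range (m + 1), (2 * (j:ℝ) + 1)) * (2 * (m + 1 : ℝ) + 1))
          = ((2 * (m:ℝ) + 3) * Wint (m + 1)) * ∏ j ∈ Finset.range (m + 1), (2 * (j:ℝ) + 1) := by
            rw [h3]; ring
        _ = ((2 * (m:ℝ) + 2) * Wint m) * ∏ j ∈ Finset.range (m + 1), (2 * (j:ℝ) + 1) := by rw [hrec]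
        _ = (2 * (m:ℝ) + 2) * (Wint m * ∏ j ∈ Finset.range (m + 1), (2 * (j:ℝ) + 1)) := by ring
        _ = (2 * (m:ℝ) + 2) * (2 ^ (m + 1) * (Nat.factorial m : ℝ)) := by rw [ih]
        _ = 2 ^ (m + 2) * (((m:ℝ) + 1) * (Nat.factorial m : ℝ)) := by ring

lemma scaling (u : ℝ) (hu : 0 < u) (m : ℕ) :
    ∫ x in (-Real.sqrt (2 * u))..(Real.sqrt (2 * u)), (u - x ^ 2 / 2) ^ m
      = Real.sqrt (2 * u) * u ^ m * Wint m := by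
  have hs : 0 < Real.sqrt (2 * u) := Real.sqrt_pos.mpr (by linarith)
  have hs2 : Real.sqrt (2 * u) ^ 2 = 2 * u := Real.sq_sqrt (by linarith)
  set s := Real.sqrt (2 * u) with hsdef
  have key := intervalIntegral.integral_comp_mul_left (a := (-1:ℝ)) (b := 1)
    (fun x => (u - x ^ 2 / 2) ^ m) (c := s) hs.ne'
  have lhs_eq : (∫ x in (-1:ℝ)..1, (u - (s * x) ^ 2 / 2) ^ m)
      = ∫ x in (-1:ℝ)..1, u ^ m * (1 - x ^ 2) ^ m := by
    apply intervalIntegral.integral_congr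
    intro x _
    have hxx : u - (s * x) ^ 2 / 2 = u * (1 - x ^ 2) := by
      rw [mul_pow, hs2]; ring
    simp only [mul_pow]
    rw [hs2]
    have h2 : u - 2 * u * x ^ 2 / 2 = u * (1 - x ^ 2) := by ring
    rw [h2, mul_pow]
  rw [lhs_eq, intervalIntegral.integral_const_mul] at key
  have hWint : (∫ x in (-1:ℝ)..1, (1 - x ^ 2) ^ m) = Wint m := rfl
  rw [hWint, smul_eq_mul] at key
  have h5 : s * (u ^ m * Wint m) = s * (s⁻¹ * ∫ x in (-s)..s, (u - x ^ 2 / 2) ^ m) := by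
    rw [key]; norm_num
  rw [← mul_assoc s s⁻¹ _, mul_inv_cancel₀ hs.ne', one_mul] at h5
  rw [mul_assoc]; exact h5.symm

/-- For the A₁ singularity `f_τ(x) = x²/2 + τ` with thimble
`β(λ) = [-√(2(λ-τ)), √(2(λ-τ))]`, the `λ`-derivative of the period integral
`∫_{β(λ)} (λ - τ - x²/2)^{n+1}/(n+1)! dx` equals `2·(2(λ-τ))^{n+1/2}/(2n+1)!!`. -/
theorem a1_period_derivative (τ : ℝ) (n : ℕ) (lam : ℝ) (h : τ < lam) :
    HasDerivAt
      (fun l : ℝ =>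
        ∫ x in (-Real.sqrt (2 * (l - τ)))..(Real.sqrt (2 * (l - τ))),
          (l - τ - x ^ 2 / 2) ^ (n + 1) / (Nat.factorial (n + 1) : ℝ))
      (2 * (2 * (lam - τ)) ^ ((n : ℝ) + 1 / 2) /
        ∏ j ∈ Finset.range (n + 1), (2 * (j : ℝ) + 1)) lam := by
  set u : ℝ := lam - τ with hudef
  have hu : 0 < u := by simp [hudef]; linarith
  set s : ℝ := Real.sqrt (2 * u) with hsdef
  have hs0 : 0 < s := Real.sqrt_pos.mpr (by linarith)
  have hs2 : s ^ 2 = 2 * u := Real.sq_sqrt (by linarith)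
  set P : ℝ := ∏ j ∈ Finset.range (n + 1), (2 * (j : ℝ) + 1) with hPdef
  have hP : 0 < P := Finset.prod_pos (fun j _ => by positivity)
  have hfac : (0:ℝ) < (Nat.factorial (n + 1) : ℝ) := by positivity
  -- the smooth model function
  set g : ℝ → ℝ := fun l =>
    Real.sqrt (2 * (l - τ)) * (l - τ) ^ (n + 1) * Wint (n + 1) / (Nat.factorial (n + 1) : ℝ)
    with hgdef
  -- eventual equality
  have hev : (fun l : ℝ =>
      ∫ x in (-Real.sqrt (2 * (l - τ)))..(Real.sqrt (2 * (l - τ))),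
        (l - τ - x ^ 2 / 2) ^ (n + 1) / (Nat.factorial (n + 1) : ℝ)) =ᶠ[nhds lam] g := by
    filter_upwards [Ioi_mem_nhds h] with l hl
    have hl' : 0 < l - τ := by simpa using hl
    rw [hgdef]
    simp only []
    rw [intervalIntegral.integral_div, scaling (l - τ) hl' (n + 1)]
  -- derivative of g
  have h1 : HasDerivAt (fun l : ℝ => 2 * (l - τ)) 2 lam := by
    simpa using ((hasDerivAt_id lam).sub_const τ).const_mul 2
  have hsq : HasDerivAt (fun l : ℝ => Real.sqrt (2 * (l - τ))) (1 / (2 * s) * 2) lam := by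
    have := (Real.hasDerivAt_sqrt (by positivity : 2 * u ≠ 0)).comp lam h1
    simpa only [Function.comp_def] using this
  have hpow : HasDerivAt (fun l : ℝ => (l - τ) ^ (n + 1)) ((n + 1 : ℕ) * u ^ n) lam := by
    have := ((hasDerivAt_id lam).sub_const τ).fun_pow (n + 1)
    simpa [hudef] using this
  have hg : HasDerivAt g
      ((1 / (2 * s) * 2 * u ^ (n + 1) + s * ((n + 1 : ℕ) * u ^ n)) * Wint (n + 1)
        / (Nat.factorial (n + 1) : ℝ)) lam := by
    exact ((hsq.mul hpow).mul_const (Wint (n + 1))).div_const (Nat.factorial (n + 1) : ℝ)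
  -- value equality
  have hW := Wint_val (n + 1)
  rw [Finset.prod_range_succ] at hW
  have hW' : Wint (n + 1) * (P * (2 * (n:ℝ) + 3)) = 2 ^ (n + 2) * (Nat.factorial (n + 1) : ℝ) := by
    rw [← hW, ← hPdef]; push_cast; ring_nf
  have hrpow : (2 * u) ^ ((n : ℝ) + 1 / 2) = 2 ^ n * u ^ n * s := by
    rw [Real.rpow_add (by linarith), Real.rpow_natCast, ← Real.sqrt_eq_rpow, mul_pow, ← hsdef]
  have hus : u / s = s / 2 := by
    rw [div_eq_div_iff hs0.ne' two_ne_zero]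
    linear_combination -hs2
  have hval : (1 / (2 * s) * 2 * u ^ (n + 1) + s * ((n + 1 : ℕ) * u ^ n)) * Wint (n + 1)
        / (Nat.factorial (n + 1) : ℝ) = 2 * (2 * u) ^ ((n : ℝ) + 1 / 2) / P := by
    rw [hrpow]
    have hterm : 1 / (2 * s) * 2 * u ^ (n + 1) = u ^ n * (s / 2) := by
      rw [← hus, pow_succ]
      field_simp
    rw [hterm]
    rw [div_eq_div_iff hfac.ne' hP.ne']
    push_cast
    linear_combination (u ^ n * s * (1 / 2)) * hW'
  exact hval ▸ hg.congr_of_eventuallyEq hev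
end

section
/- Let q > 0 and z > 0 be real, and for λ > 2√q let x₋(λ) = (λ − √(λ² − 4q))/2 and x₊(λ) = (λ + √(λ² − 4q))/2. Then for every k ∈ ℕ: ∫_{2√q}^{∞} e^{−λ/z} ( ∫_{x₋(λ)}^{x₊(λ)} (λ − x − q/x)^{k}/k! · dx/x ) dλ = z^{k+1} · ∫_0^{∞} e^{−(x + q/x)/z} · dx/x, with both sides finite. -/
open MeasureTheory intervalIntegral

lemma cp1_aux_base_int {z : ℝ} (hz : 0 < z) (k : ℕ) :
    MeasureTheory.IntegrableOn (fun t : ℝ => t ^ k * Real.exp (-(1/z) * t)) (Set.Ioi 0) := by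
  have h := integrableOn_rpow_mul_exp_neg_mul_rpow (p := 1) (s := (k : ℝ)) (b := 1/z)
    (by linarith [Nat.cast_nonneg (α := ℝ) k]) one_pos (by positivity)
  simpa [Real.rpow_natCast, Real.rpow_one] using h

lemma cp1_aux_base_val {z : ℝ} (hz : 0 < z) (k : ℕ) :
    ∫ t in Set.Ioi (0:ℝ), t ^ k * Real.exp (-(1/z) * t)
      = (k.factorial : ℝ) * z ^ (k + 1) := by
  have h := Real.integral_rpow_mul_exp_neg_mul_Ioi (a := (k : ℝ) + 1) (r := 1/z)
    (by positivity) (by positivity)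
  rw [show ((k:ℝ) + 1 - 1) = (k:ℝ) by ring] at h
  have h2 : ∫ t in Set.Ioi (0:ℝ), t ^ k * Real.exp (-(1/z) * t)
      = (1 / (1/z)) ^ ((k:ℝ)+1) * Real.Gamma ((k:ℝ)+1) := by
    rw [← h]
    congr 1 with t
    rw [Real.rpow_natCast]
    ring_nf
  rw [h2, one_div_one_div, Real.Gamma_nat_eq_factorial,
    show ((k:ℝ)+1) = ((k+1 : ℕ) : ℝ) by push_cast; ring, Real.rpow_natCast]
  ring

lemma cp1_aux_gamma {z : ℝ} (hz : 0 < z) (k : ℕ) (c : ℝ) :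
    MeasureTheory.IntegrableOn (fun lam : ℝ => Real.exp (-lam / z) * (lam - c) ^ k)
      (Set.Ioi c) ∧
    ∫ lam in Set.Ioi c, Real.exp (-lam / z) * (lam - c) ^ k
      = (k.factorial : ℝ) * z ^ (k + 1) * Real.exp (-c / z) := by
  have hmp : MeasurePreserving (fun t : ℝ => t + c) volume volume :=
    measurePreserving_add_right volume c
  have hemb : MeasurableEmbedding (fun t : ℝ => t + c) :=
    (MeasurableEquiv.addRight c).measurableEmbedding
  have hpre : (fun t : ℝ => t + c) ⁻¹' (Set.Ioi c) = Set.Ioi 0 := by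
    ext t; simp
  have hcomp : ∀ t : ℝ, Real.exp (-(t + c) / z) * (t + c - c) ^ k
      = Real.exp (-c / z) * (t ^ k * Real.exp (-(1/z) * t)) := by
    intro t
    rw [show (-(t + c) / z) = -c/z + (-(1/z) * t) by ring, Real.exp_add]
    ring
  constructor
  · rw [← hmp.integrableOn_comp_preimage hemb, hpre]
    have : IntegrableOn (fun t : ℝ => Real.exp (-c / z) * (t ^ k * Real.exp (-(1/z) * t)))
        (Set.Ioi 0) := (cp1_aux_base_int hz k).const_mul _
    exact this.congr_fun (fun t _ => (hcomp t).symm) measurableSet_Ioi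
  · rw [← hmp.setIntegral_preimage_emb hemb
      (fun lam : ℝ => Real.exp (-lam / z) * (lam - c) ^ k) (Set.Ioi c), hpre]
    calc ∫ t in Set.Ioi (0:ℝ), Real.exp (-(t + c) / z) * (t + c - c) ^ k
        = ∫ t in Set.Ioi (0:ℝ), Real.exp (-c / z) * (t ^ k * Real.exp (-(1/z) * t)) := by
          exact setIntegral_congr_fun measurableSet_Ioi (fun t _ => hcomp t)
      _ = Real.exp (-c / z) * ∫ t in Set.Ioi (0:ℝ), t ^ k * Real.exp (-(1/z) * t) := by
          exact MeasureTheory.integral_const_mul _ _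
      _ = (k.factorial : ℝ) * z ^ (k + 1) * Real.exp (-c / z) := by
          rw [cp1_aux_base_val hz k]; ring

lemma cp1_aux_bound {q z : ℝ} (hq : 0 < q) (hz : 0 < z) {x : ℝ} (hx : 0 < x) :
    Real.exp (-(x + q / x) / z) / x ≤ (z / q) * Real.exp (-(1/z) * x) := by
  have hs : 0 < q / (x * z) := by positivity
  have h1 : q / (x * z) ≤ Real.exp (q / (x * z)) := by
    have := Real.add_one_le_exp (q / (x * z)); linarith
  have h2 : Real.exp (-(q / (x * z))) ≤ x * z / q := by
    rw [Real.exp_neg]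
    have h3 : (Real.exp (q / (x * z)))⁻¹ ≤ (q / (x * z))⁻¹ :=
      inv_anti₀ hs h1
    calc (Real.exp (q / (x * z)))⁻¹ ≤ (q / (x * z))⁻¹ := h3
      _ = x * z / q := by rw [inv_div]
  have hsplit : Real.exp (-(x + q / x) / z) =
      Real.exp (-(1/z) * x) * Real.exp (-(q / (x * z))) := by
    rw [← Real.exp_add]
    congr 1
    field_simp
    ring
  rw [hsplit]
  rw [mul_div_assoc, mul_comm ((z:ℝ)/q) _]
  apply mul_le_mul_of_nonneg_left _ (Real.exp_nonneg _)
  calc Real.exp (-(q / (x * z))) / x ≤ (x * z / q) / x := by gcongr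
    _ = z / q := by field_simp

lemma cp1_aux_rhs_int {q z : ℝ} (hq : 0 < q) (hz : 0 < z) :
    MeasureTheory.IntegrableOn
      (fun x : ℝ => Real.exp (-(x + q / x) / z) / x) (Set.Ioi 0) := by
  have hg : IntegrableOn (fun x : ℝ => (z/q) * Real.exp (-(1/z) * x)) (Set.Ioi 0) :=
    ((exp_neg_integrableOn_Ioi 0 (one_div_pos.mpr hz))).const_mul _
  have hcont : ContinuousOn (fun x : ℝ => Real.exp (-(x + q / x) / z) / x) (Set.Ioi 0) := by
    apply ContinuousOn.div
    · exact Real.continuous_exp.comp_continuousOn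
        (((continuousOn_id.add (continuousOn_const.div continuousOn_id
          (fun x hx => ne_of_gt hx))).neg).div_const z)
    · exact continuousOn_id
    · exact fun x hx => ne_of_gt hx
  apply Integrable.mono' hg (hcont.aestronglyMeasurable measurableSet_Ioi)
  filter_upwards [self_mem_ae_restrict measurableSet_Ioi] with x hx
  have hx' : 0 < x := hx
  rw [Real.norm_of_nonneg (div_nonneg (Real.exp_nonneg _) hx'.le)]
  exact cp1_aux_bound hq hz hx'

set_option maxHeartbeats 1000000 in
/-- The oscillating integral is the Laplace transform of the period integrals:
`∫_{2√q}^∞ e^{-λ/z} (∫_{x₋(λ)}^{x₊(λ)} (λ - x - q/x)^k/k! dx/x) dλ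
  = z^{k+1} ∫_0^∞ e^{-(x+q/x)/z} dx/x`, with both sides finite. -/
theorem cp1_oscillating_integral_laplace (q z : ℝ) (hq : 0 < q) (hz : 0 < z) (k : ℕ) :
    MeasureTheory.IntegrableOn
      (fun lam : ℝ => Real.exp (-lam / z) *
        ∫ x in ((lam - Real.sqrt (lam ^ 2 - 4 * q)) / 2)..
            ((lam + Real.sqrt (lam ^ 2 - 4 * q)) / 2),
          (lam - x - q / x) ^ k / (Nat.factorial k : ℝ) / x)
      (Set.Ioi (2 * Real.sqrt q)) ∧
    MeasureTheory.IntegrableOn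
      (fun x : ℝ => Real.exp (-(x + q / x) / z) / x) (Set.Ioi 0) ∧
    (∫ lam in Set.Ioi (2 * Real.sqrt q), Real.exp (-lam / z) *
        ∫ x in ((lam - Real.sqrt (lam ^ 2 - 4 * q)) / 2)..
            ((lam + Real.sqrt (lam ^ 2 - 4 * q)) / 2),
          (lam - x - q / x) ^ k / (Nat.factorial k : ℝ) / x)
      = z ^ (k + 1) * ∫ x in Set.Ioi (0 : ℝ), Real.exp (-(x + q / x) / z) / x := by
  have hkfac : (0:ℝ) < (k.factorial : ℝ) := by exact_mod_cast k.factorial_pos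
  set S : Set (ℝ × ℝ) := {p : ℝ × ℝ | 0 < p.1 ∧ p.1 + q / p.1 ≤ p.2} with hS
  set G : ℝ × ℝ → ℝ := fun p =>
    Real.exp (-p.2 / z) * ((p.2 - p.1 - q / p.1) ^ k / (k.factorial : ℝ) / p.1) with hG
  set F : ℝ × ℝ → ℝ := S.indicator G with hFdef
  have hSmeas : MeasurableSet S := by
    have : S = {p : ℝ × ℝ | 0 < p.1} ∩ {p : ℝ × ℝ | p.1 + q / p.1 ≤ p.2} := by
      ext p; simp [hS, Set.mem_setOf_eq]
    rw [this]
    exact (measurableSet_lt measurable_const measurable_fst).inter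
      (measurableSet_le (measurable_fst.add (measurable_const.div measurable_fst))
        measurable_snd)
  have hGmeas : Measurable G := by
    apply Measurable.mul
    · exact (measurable_snd.neg.div_const z).exp
    · exact ((((measurable_snd.sub measurable_fst).sub
        (measurable_const.div measurable_fst)).pow_const k).div_const _).div measurable_fst
  have hFmeas : AEStronglyMeasurable F ((volume : Measure ℝ).prod volume) :=
    (hGmeas.indicator hSmeas).aestronglyMeasurable
  have hFnonneg : ∀ p, 0 ≤ F p := by
    intro p
    apply Set.indicator_nonneg
    rintro p ⟨hp1, hp2⟩
    have h0 : 0 ≤ p.2 - p.1 - q / p.1 := by linarith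
    exact mul_nonneg (Real.exp_nonneg _)
      (div_nonneg (div_nonneg (pow_nonneg h0 k) hkfac.le) hp1.le)
  -- lam-slices
  have hfx : ∀ x : ℝ, 0 < x → (fun lam => F (x, lam)) = Set.indicator (Set.Ici (x + q / x))
      (fun lam => (Real.exp (-lam / z) * (lam - (x + q / x)) ^ k)
        * ((k.factorial : ℝ)⁻¹ * x⁻¹)) := by
    intro x hx
    funext lam
    simp only [hFdef, hG, hS, Set.indicator_apply, Set.mem_setOf_eq, Set.mem_Ici, hx, true_and]
    split
    · ring
    · rfl
  have hfx0 : ∀ x : ℝ, x ≤ 0 → (fun lam => F (x, lam)) = fun _ => 0 := by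
    intro x hx
    funext lam
    apply Set.indicator_of_notMem
    rintro ⟨h1, -⟩
    exact absurd h1 (not_lt.mpr hx)
  have hslice_int : ∀ x : ℝ, Integrable (fun lam => F (x, lam)) volume := by
    intro x
    rcases le_or_gt x 0 with hx | hx
    · rw [hfx0 x hx]; exact integrable_zero _ _ _
    · rw [hfx x hx, integrable_indicator_iff measurableSet_Ici]
      have : IntegrableOn (fun lam : ℝ => (Real.exp (-lam / z) * (lam - (x + q / x)) ^ k)
          * ((k.factorial : ℝ)⁻¹ * x⁻¹)) (Set.Ioi (x + q / x)) :=
        ((cp1_aux_gamma hz k (x + q / x)).1.mul_const _)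
      exact Iff.mpr integrableOn_Ici_iff_integrableOn_Ioi this
  have hslice_val : ∀ x : ℝ, (∫ lam, F (x, lam))
      = Set.indicator (Set.Ioi (0:ℝ))
          (fun x => z ^ (k + 1) * (Real.exp (-(x + q / x) / z) / x)) x := by
    intro x
    rcases le_or_gt x 0 with hx | hx
    · rw [Set.indicator_of_notMem (by simpa using hx), hfx0 x hx]
      simp
    · rw [Set.indicator_of_mem (Set.mem_Ioi.mpr hx), hfx x hx,
        MeasureTheory.integral_indicator measurableSet_Ici, integral_Ici_eq_integral_Ioi,
        MeasureTheory.integral_mul_const, (cp1_aux_gamma hz k (x + q / x)).2]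
      field_simp
  have hF_int : Integrable F ((volume : Measure ℝ).prod volume) := by
    rw [MeasureTheory.integrable_prod_iff hFmeas]
    refine ⟨Filter.Eventually.of_forall hslice_int, ?_⟩
    have heq : (fun x => ∫ lam, ‖F (x, lam)‖)
        = fun x => Set.indicator (Set.Ioi (0:ℝ))
            (fun x => z ^ (k + 1) * (Real.exp (-(x + q / x) / z) / x)) x := by
      funext x
      calc ∫ lam, ‖F (x, lam)‖ = ∫ lam, F (x, lam) := by
            congr 1
            funext lam
            exact Real.norm_of_nonneg (hFnonneg _)
        _ = _ := hslice_val x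
    rw [heq, integrable_indicator_iff measurableSet_Ioi]
    exact (cp1_aux_rhs_int hq hz).const_mul _
  have hswap : (∫ x : ℝ, ∫ lam : ℝ, F (x, lam)) = ∫ lam : ℝ, ∫ x : ℝ, F (x, lam) :=
    MeasureTheory.integral_integral_swap (f := fun x lam => F (x, lam)) hF_int
  have hleft : (∫ x : ℝ, ∫ lam : ℝ, F (x, lam))
      = z ^ (k + 1) * ∫ x in Set.Ioi (0:ℝ), Real.exp (-(x + q / x) / z) / x := by
    rw [show (fun x : ℝ => ∫ lam : ℝ, F (x, lam)) = _ from funext hslice_val,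
      MeasureTheory.integral_indicator measurableSet_Ioi, MeasureTheory.integral_const_mul]
  -- x-slices
  have hFx : ∀ lam : ℝ, (fun x => F (x, lam)) = Set.indicator {x : ℝ | 0 < x ∧ x + q / x ≤ lam}
      (fun x => Real.exp (-lam / z) * ((lam - x - q / x) ^ k / (k.factorial : ℝ) / x)) := by
    intro lam
    funext x
    simp only [hFdef, hG, hS, Set.indicator_apply, Set.mem_setOf_eq]
  have hTmeas : ∀ lam : ℝ, MeasurableSet {x : ℝ | 0 < x ∧ x + q / x ≤ lam} := by
    intro lam
    have : {x : ℝ | 0 < x ∧ x + q / x ≤ lam}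
        = {x : ℝ | 0 < x} ∩ {x : ℝ | x + q / x ≤ lam} := by ext x; simp [Set.mem_setOf_eq]
    rw [this]
    exact (measurableSet_lt measurable_const measurable_id).inter
      (measurableSet_le (measurable_id.add (measurable_const.div measurable_id))
        measurable_const)
  have hsq : Real.sqrt q ^ 2 = q := Real.sq_sqrt hq.le
  have hsqpos : 0 < Real.sqrt q := Real.sqrt_pos.mpr hq
  have hlow : ∀ lam : ℝ, lam ≤ 2 * Real.sqrt q → (∫ x : ℝ, F (x, lam)) = 0 := by
    intro lam hlam
    have hsub : {x : ℝ | 0 < x ∧ x + q / x ≤ lam} ⊆ {Real.sqrt q} := by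
      rintro x ⟨hx, hle⟩
      have h1 : q ≤ (lam - x) * x := by
        have := (div_le_iff₀ hx).mp (by linarith : q / x ≤ lam - x)
        linarith
      have h2 : (x - Real.sqrt q) ^ 2 ≤ 0 := by
        nlinarith [mul_nonneg (sub_nonneg.mpr hlam) hx.le]
      have : x = Real.sqrt q := by nlinarith [sq_nonneg (x - Real.sqrt q)]
      exact this
    have hnull : (volume : Measure ℝ).restrict {x : ℝ | 0 < x ∧ x + q / x ≤ lam} = 0 :=
      Measure.restrict_eq_zero.mpr
        (measure_mono_null hsub (measure_singleton _))
    rw [hFx lam, MeasureTheory.integral_indicator (hTmeas lam), hnull, integral_zero_measure]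
  have hhigh : ∀ lam : ℝ, 2 * Real.sqrt q < lam →
      (∫ x : ℝ, F (x, lam)) = Real.exp (-lam / z) *
        ∫ x in ((lam - Real.sqrt (lam ^ 2 - 4 * q)) / 2)..
            ((lam + Real.sqrt (lam ^ 2 - 4 * q)) / 2),
          (lam - x - q / x) ^ k / (Nat.factorial k : ℝ) / x := by
    intro lam hlam
    have hlampos : 0 < lam := lt_trans (by positivity) hlam
    have hdisc : 0 < lam ^ 2 - 4 * q := by nlinarith
    set s := Real.sqrt (lam ^ 2 - 4 * q) with hs
    have hs2 : s ^ 2 = lam ^ 2 - 4 * q := Real.sq_sqrt hdisc.le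
    have hsnn : 0 ≤ s := Real.sqrt_nonneg _
    have hslam : s < lam := by nlinarith
    have hTeq : {x : ℝ | 0 < x ∧ x + q / x ≤ lam}
        = Set.Icc ((lam - s) / 2) ((lam + s) / 2) := by
      ext x
      simp only [Set.mem_setOf_eq, Set.mem_Icc]
      constructor
      · rintro ⟨hx, hle⟩
        have h1 : q ≤ (lam - x) * x := by
          have := (div_le_iff₀ hx).mp (by linarith : q / x ≤ lam - x)
          linarith
        constructor
        · nlinarith [sq_nonneg (2 * x - lam + s)]
        · nlinarith [sq_nonneg (2 * x - lam - s)]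
      · rintro ⟨h1, h2⟩
        have hx : 0 < x := lt_of_lt_of_le (by linarith : (0:ℝ) < (lam - s) / 2) h1
        refine ⟨hx, ?_⟩
        have hkey : q ≤ (lam - x) * x := by
          nlinarith [mul_nonneg (by linarith : (0:ℝ) ≤ 2 * x - (lam - s))
            (by linarith : (0:ℝ) ≤ (lam + s) - 2 * x)]
        have h3 : q / x ≤ lam - x := (div_le_iff₀ hx).mpr (by linarith)
        linarith
    rw [hFx lam, MeasureTheory.integral_indicator (hTmeas lam), hTeq, integral_Icc_eq_integral_Ioc,
      ← intervalIntegral.integral_of_le (by linarith : (lam - s) / 2 ≤ (lam + s) / 2),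
      intervalIntegral.integral_const_mul]
  have hΦ_int : Integrable (fun lam : ℝ => ∫ x : ℝ, F (x, lam)) volume :=
    hF_int.integral_prod_right
  refine ⟨?_, cp1_aux_rhs_int hq hz, ?_⟩
  · exact (hΦ_int.integrableOn).congr_fun (fun lam hlam => hhigh lam hlam) measurableSet_Ioi
  · calc (∫ lam in Set.Ioi (2 * Real.sqrt q), Real.exp (-lam / z) *
          ∫ x in ((lam - Real.sqrt (lam ^ 2 - 4 * q)) / 2)..
              ((lam + Real.sqrt (lam ^ 2 - 4 * q)) / 2),
            (lam - x - q / x) ^ k / (Nat.factorial k : ℝ) / x)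
        = ∫ lam in Set.Ioi (2 * Real.sqrt q), ∫ x : ℝ, F (x, lam) :=
          setIntegral_congr_fun measurableSet_Ioi (fun lam hlam => (hhigh lam hlam).symm)
      _ = ∫ lam : ℝ, ∫ x : ℝ, F (x, lam) :=
          setIntegral_eq_integral_of_forall_compl_eq_zero
            (fun lam hlam => hlow lam (not_lt.mp (by simpa using hlam)))
      _ = ∫ x : ℝ, ∫ lam : ℝ, F (x, lam) := hswap.symm
      _ = z ^ (k + 1) * ∫ x in Set.Ioi (0:ℝ), Real.exp (-(x + q / x) / z) / x := hleft
end

section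
/- Let Q > 0 and z > 0 be real and define 𝒥(t) = ∫_0^{∞} e^{−(x + Qe^t/x)/z} dx/x for t ∈ ℝ. Then 𝒥 is twice differentiable on ℝ and satisfies z² · 𝒥''(t) = Qe^t · 𝒥(t) for all t ∈ ℝ. -/
open MeasureTheory Set Filter Topology

lemma cp1_exp_bound (n : ℕ) {d x : ℝ} (hd : 0 < d) (hx : 0 < x) :
    Real.exp (-(d / x)) ≤ (n.factorial : ℝ) * (x / d) ^ n := by
  have hy : 0 < d / x := div_pos hd hx
  have h1 : (d / x) ^ n / (n.factorial : ℝ) ≤ Real.exp (d / x) :=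
    Real.pow_div_factorial_le_exp _ hy.le n
  have h2 : 0 < (d / x) ^ n / (n.factorial : ℝ) := by positivity
  calc Real.exp (-(d / x)) = (Real.exp (d/x))⁻¹ := Real.exp_neg _
    _ ≤ ((d / x) ^ n / (n.factorial : ℝ))⁻¹ := inv_anti₀ h2 h1
    _ = (n.factorial : ℝ) * (x / d) ^ n := by
        rw [inv_div, div_pow, div_div_eq_mul_div, div_pow, mul_div_assoc]

-- core bound lemma
lemma cp1_bound (n : ℕ) {z b c x : ℝ} (hz : 0 < z) (hb : 0 < b) (hbc : b ≤ c) (hx : 0 < x) :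
    Real.exp (-(x + c / x) / z) / x ^ n
      ≤ (n.factorial : ℝ) * (z / b) ^ n * Real.exp (-z⁻¹ * x) := by
  have hsplit : Real.exp (-(x + c / x) / z)
      = Real.exp (-z⁻¹ * x) * Real.exp (-((c / z) / x)) := by
    rw [← Real.exp_add]; congr 1; field_simp; ring
  have h1 : Real.exp (-((c / z) / x)) ≤ Real.exp (-((b / z) / x)) := by
    apply Real.exp_le_exp.2
    have : b / z / x ≤ c / z / x := by gcongr
    linarith
  have h2 : Real.exp (-((b / z) / x)) ≤ (n.factorial : ℝ) * (x / (b / z)) ^ n :=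
    cp1_exp_bound n (div_pos hb hz) hx
  have hxn : (0:ℝ) < x ^ n := by positivity
  calc Real.exp (-(x + c / x) / z) / x ^ n
      = Real.exp (-z⁻¹ * x) * Real.exp (-((c / z) / x)) / x ^ n := by rw [hsplit]
    _ ≤ Real.exp (-z⁻¹ * x) * ((n.factorial : ℝ) * (x / (b / z)) ^ n) / x ^ n := by
        gcongr
        exact h1.trans h2
    _ = (n.factorial : ℝ) * (z / b) ^ n * Real.exp (-z⁻¹ * x) := by
        rw [div_div_eq_mul_div]
        field_simp
        ring

lemma cp1_meas {z c : ℝ} (f : ℝ → ℝ) (hf : Measurable f) :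
    AEStronglyMeasurable (fun x : ℝ => f x * (Real.exp (-(x + c / x) / z) / x))
      (volume.restrict (Set.Ioi 0)) := by
  apply Measurable.aestronglyMeasurable
  fun_prop

lemma cp1_integrable_exp (z : ℝ) (hz : 0 < z) (C : ℝ) :
    IntegrableOn (fun x : ℝ => C * Real.exp (-z⁻¹ * x)) (Set.Ioi 0) :=
  (exp_neg_integrableOn_Ioi 0 (inv_pos.2 hz)).const_mul C

lemma cp1_int (n : ℕ) {z c : ℝ} (hz : 0 < z) (hc : 0 < c) :
    IntegrableOn (fun x : ℝ => Real.exp (-(x + c / x) / z) / x ^ n) (Set.Ioi 0) := by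
  apply Integrable.mono' (cp1_integrable_exp z hz ((n.factorial : ℝ) * (z / c) ^ n))
  · apply Measurable.aestronglyMeasurable; fun_prop
  · filter_upwards [ae_restrict_mem measurableSet_Ioi] with x hx
    rw [Real.norm_eq_abs, abs_of_nonneg (div_nonneg (Real.exp_pos _).le (pow_nonneg (le_of_lt hx) n))]
    exact cp1_bound n hz hc le_rfl hx

lemma cp1_hasDerivAt0 (Q z x : ℝ) (hx : x ≠ 0) (t : ℝ) :
    HasDerivAt (fun t => Real.exp (-(x + Q * Real.exp t / x) / z) / x)
      (-(Q * Real.exp t / (z * x)) * (Real.exp (-(x + Q * Real.exp t / x) / z) / x)) t := by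
  have h1 : HasDerivAt (fun t : ℝ => -(x + Q * Real.exp t / x) / z)
      (-(Q * Real.exp t / x) / z) t := by
    exact ((((Real.hasDerivAt_exp t).const_mul Q).div_const x).const_add x).neg.div_const z
  have h2 := (h1.exp).div_const x
  refine h2.congr_deriv ?_
  field_simp

lemma cp1_hasDerivAt1 (Q z x : ℝ) (hx : x ≠ 0) (hz : z ≠ 0) (t : ℝ) :
    HasDerivAt (fun t => -(Q * Real.exp t / (z * x)) * (Real.exp (-(x + Q * Real.exp t / x) / z) / x))
      (((Q * Real.exp t / (z * x)) ^ 2 - Q * Real.exp t / (z * x)) *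
        (Real.exp (-(x + Q * Real.exp t / x) / z) / x)) t := by
  have hu : HasDerivAt (fun t : ℝ => -(Q * Real.exp t / (z * x)))
      (-(Q * Real.exp t / (z * x))) t :=
    (((Real.hasDerivAt_exp t).const_mul Q).div_const (z * x)).neg
  have h2 := hu.mul (cp1_hasDerivAt0 Q z x hx t)
  refine h2.congr_deriv ?_
  field_simp
  ring

lemma cp1_ball_bounds {Q t₀ t : ℝ} (hQ : 0 < Q) (ht : t ∈ Metric.ball t₀ 1) :
    Q * Real.exp (t₀ - 1) ≤ Q * Real.exp t ∧ Q * Real.exp t ≤ Q * Real.exp (t₀ + 1) := by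
  rw [Metric.mem_ball, Real.dist_eq, abs_lt] at ht
  constructor <;> apply mul_le_mul_of_nonneg_left (Real.exp_le_exp.2 (by linarith)) hQ.le

lemma cp1_step1 (Q z : ℝ) (hQ : 0 < Q) (hz : 0 < z) (t₀ : ℝ) :
    Integrable (fun x => -(Q * Real.exp t₀ / (z * x)) *
        (Real.exp (-(x + Q * Real.exp t₀ / x) / z) / x)) (volume.restrict (Set.Ioi 0)) ∧
    HasDerivAt (fun t => ∫ x in Set.Ioi (0:ℝ), Real.exp (-(x + Q * Real.exp t / x) / z) / x)
      (∫ x in Set.Ioi (0:ℝ), -(Q * Real.exp t₀ / (z * x)) *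
        (Real.exp (-(x + Q * Real.exp t₀ / x) / z) / x)) t₀ := by
  set b := Q * Real.exp (t₀ - 1) with hbdef
  set B := Q * Real.exp (t₀ + 1) with hBdef
  have hb : 0 < b := by positivity
  have hB : 0 < B := by positivity
  apply hasDerivAt_integral_of_dominated_loc_of_deriv_le (Metric.ball_mem_nhds _ one_pos)
    (F := fun t x => Real.exp (-(x + Q * Real.exp t / x) / z) / x)
    (F' := fun t x => -(Q * Real.exp t / (z * x)) *
      (Real.exp (-(x + Q * Real.exp t / x) / z) / x))
    (bound := fun x => (B / z) * (((2:ℕ).factorial : ℝ) * (z / b) ^ 2 * Real.exp (-z⁻¹ * x)))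
  · exact Eventually.of_forall fun t => (by fun_prop : Measurable fun x : ℝ =>
      Real.exp (-(x + Q * Real.exp t / x) / z) / x).aestronglyMeasurable
  · simpa [IntegrableOn] using cp1_int 1 hz (by positivity : (0:ℝ) < Q * Real.exp t₀)
  · exact (by fun_prop : Measurable fun x : ℝ => -(Q * Real.exp t₀ / (z * x)) *
      (Real.exp (-(x + Q * Real.exp t₀ / x) / z) / x)).aestronglyMeasurable
  · filter_upwards [ae_restrict_mem measurableSet_Ioi] with x hx t ht
    have hx' : (0:ℝ) < x := hx
    obtain ⟨hbc, hcB⟩ := cp1_ball_bounds hQ ht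
    set A := Q * Real.exp t with hA
    have hApos : 0 < A := by positivity
    set E := Real.exp (-(x + A / x) / z) with hE
    have hEpos : 0 < E := Real.exp_pos _
    have habs : ‖-(A / (z * x)) * (E / x)‖ = (A / z) * (E / x ^ 2) := by
      rw [Real.norm_eq_abs, abs_mul, abs_neg, abs_of_nonneg (by positivity),
        abs_of_nonneg (by positivity)]
      field_simp
    rw [habs]
    have h2 : E / x ^ 2 ≤ ((2:ℕ).factorial : ℝ) * (z / b) ^ 2 * Real.exp (-z⁻¹ * x) :=
      cp1_bound 2 hz hb hbc hx'
    exact mul_le_mul (by gcongr) h2 (by positivity) (by positivity)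
  · exact (cp1_integrable_exp z hz ((B / z) * (((2:ℕ).factorial : ℝ) * (z / b) ^ 2))).congr_fun
      (fun x _ => by ring) measurableSet_Ioi
  · filter_upwards [ae_restrict_mem measurableSet_Ioi] with x hx t _
    exact cp1_hasDerivAt0 Q z x (ne_of_gt hx) t

lemma cp1_step2 (Q z : ℝ) (hQ : 0 < Q) (hz : 0 < z) (t₀ : ℝ) :
    HasDerivAt (fun t => ∫ x in Set.Ioi (0:ℝ), -(Q * Real.exp t / (z * x)) *
        (Real.exp (-(x + Q * Real.exp t / x) / z) / x))
      (∫ x in Set.Ioi (0:ℝ), ((Q * Real.exp t₀ / (z * x)) ^ 2 - Q * Real.exp t₀ / (z * x)) *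
        (Real.exp (-(x + Q * Real.exp t₀ / x) / z) / x)) t₀ := by
  set b := Q * Real.exp (t₀ - 1) with hbdef
  set B := Q * Real.exp (t₀ + 1) with hBdef
  have hb : 0 < b := by positivity
  have hB : 0 < B := by positivity
  refine (hasDerivAt_integral_of_dominated_loc_of_deriv_le (Metric.ball_mem_nhds _ one_pos)
    (F := fun t x => -(Q * Real.exp t / (z * x)) *
      (Real.exp (-(x + Q * Real.exp t / x) / z) / x))
    (F' := fun t x => ((Q * Real.exp t / (z * x)) ^ 2 - Q * Real.exp t / (z * x)) *
      (Real.exp (-(x + Q * Real.exp t / x) / z) / x))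
    (bound := fun x => (B / z) ^ 2 * (((3:ℕ).factorial : ℝ) * (z / b) ^ 3 * Real.exp (-z⁻¹ * x))
      + (B / z) * (((2:ℕ).factorial : ℝ) * (z / b) ^ 2 * Real.exp (-z⁻¹ * x)))
    ?_ ?_ ?_ ?_ ?_ ?_).2
  · exact Eventually.of_forall fun t => (by fun_prop : Measurable fun x : ℝ =>
      -(Q * Real.exp t / (z * x)) * (Real.exp (-(x + Q * Real.exp t / x) / z) / x)).aestronglyMeasurable
  · exact (cp1_step1 Q z hQ hz t₀).1
  · exact (by fun_prop : Measurable fun x : ℝ =>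
      ((Q * Real.exp t₀ / (z * x)) ^ 2 - Q * Real.exp t₀ / (z * x)) *
        (Real.exp (-(x + Q * Real.exp t₀ / x) / z) / x)).aestronglyMeasurable
  · filter_upwards [ae_restrict_mem measurableSet_Ioi] with x hx t ht
    have hx' : (0:ℝ) < x := hx
    obtain ⟨hbc, hcB⟩ := cp1_ball_bounds hQ ht
    set A := Q * Real.exp t with hA
    have hApos : 0 < A := by positivity
    set E := Real.exp (-(x + A / x) / z) with hE
    have hEpos : 0 < E := Real.exp_pos _
    set q := A / (z * x) with hq
    have hqpos : 0 < q := by positivity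
    have habs : ‖(q ^ 2 - q) * (E / x)‖ ≤ (q ^ 2 + q) * (E / x) := by
      rw [Real.norm_eq_abs, abs_mul, abs_of_nonneg (by positivity : (0:ℝ) ≤ E / x)]
      have h1 : |q ^ 2 - q| ≤ q ^ 2 + q := by
        have := sq_nonneg q
        exact abs_le.mpr ⟨by nlinarith, by nlinarith⟩
      exact mul_le_mul_of_nonneg_right h1 (by positivity)
    refine habs.trans ?_
    have hsplit : (q ^ 2 + q) * (E / x)
        = (A / z) ^ 2 * (E / x ^ 3) + (A / z) * (E / x ^ 2) := by
      rw [hq]; field_simp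
    rw [hsplit]
    have h3 : E / x ^ 3 ≤ ((3:ℕ).factorial : ℝ) * (z / b) ^ 3 * Real.exp (-z⁻¹ * x) :=
      cp1_bound 3 hz hb hbc hx'
    have h2 : E / x ^ 2 ≤ ((2:ℕ).factorial : ℝ) * (z / b) ^ 2 * Real.exp (-z⁻¹ * x) :=
      cp1_bound 2 hz hb hbc hx'
    have hAB : A / z ≤ B / z := by gcongr
    exact add_le_add
      (mul_le_mul (by gcongr) h3 (by positivity) (by positivity))
      (mul_le_mul hAB h2 (by positivity) (by positivity))
  · exact ((cp1_integrable_exp z hz ((B / z) ^ 2 * (((3:ℕ).factorial : ℝ) * (z / b) ^ 3))).congr_fun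
        (fun x _ => by ring) measurableSet_Ioi).add
      ((cp1_integrable_exp z hz ((B / z) * (((2:ℕ).factorial : ℝ) * (z / b) ^ 2))).congr_fun
        (fun x _ => by ring) measurableSet_Ioi)
  · filter_upwards [ae_restrict_mem measurableSet_Ioi] with x hx t _
    exact cp1_hasDerivAt1 Q z x (ne_of_gt hx) (ne_of_gt hz) t

lemma cp1_int_phi' {z c : ℝ} (hz : 0 < z) (hc : 0 < c) :
    IntegrableOn (fun x : ℝ => (c / x ^ 3 - z / x ^ 2 - 1 / x) * Real.exp (-(x + c / x) / z))
      (Set.Ioi 0) := by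
  have e3 := (cp1_int 3 hz hc).const_mul c
  have e2 := (cp1_int 2 hz hc).const_mul z
  have e1 := cp1_int 1 hz hc
  exact IntegrableOn.congr_fun ((e3.sub e2).sub e1)
    (fun x _ => by simp only [Pi.sub_apply]; ring) measurableSet_Ioi

lemma cp1_ibp {z c : ℝ} (hz : 0 < z) (hc : 0 < c) :
    ∫ x in Set.Ioi (0:ℝ),
      (c / x ^ 3 - z / x ^ 2 - 1 / x) * Real.exp (-(x + c / x) / z) = 0 := by
  set φ : ℝ → ℝ := fun x => z / x * Real.exp (-(x + c / x) / z) with hφ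
  set φ' : ℝ → ℝ := fun x => (c / x ^ 3 - z / x ^ 2 - 1 / x) * Real.exp (-(x + c / x) / z)
    with hφ'
  have hφ0 : φ 0 = 0 := by simp [hφ]
  have hcont : ContinuousWithinAt φ (Set.Ici 0) 0 := by
    rw [ContinuousWithinAt, hφ0]
    apply squeeze_zero' (f := φ)
      (g := fun x => z * ((2:ℕ).factorial : ℝ) * (z / c) ^ 2 * (x * Real.exp (-z⁻¹ * x)))
    · filter_upwards [self_mem_nhdsWithin] with x (hx : x ∈ Set.Ici 0)
      exact mul_nonneg (div_nonneg hz.le hx) (Real.exp_pos _).le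
    · filter_upwards [self_mem_nhdsWithin] with x (hx : x ∈ Set.Ici 0)
      rcases eq_or_lt_of_le (Set.mem_Ici.mp hx) with h | hxpos
      · simp [φ, ← h]
      · have h2 : Real.exp (-(x + c / x) / z) / x ^ 2
            ≤ ((2:ℕ).factorial : ℝ) * (z / c) ^ 2 * Real.exp (-z⁻¹ * x) :=
          cp1_bound 2 hz hc le_rfl hxpos
        have : φ x = z * x * (Real.exp (-(x + c / x) / z) / x ^ 2) := by
          rw [hφ]; field_simp
        rw [this]
        calc z * x * (Real.exp (-(x + c / x) / z) / x ^ 2)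
            ≤ z * x * (((2:ℕ).factorial : ℝ) * (z / c) ^ 2 * Real.exp (-z⁻¹ * x)) := by
              apply mul_le_mul_of_nonneg_left h2 (by positivity)
          _ = z * ((2:ℕ).factorial : ℝ) * (z / c) ^ 2 * (x * Real.exp (-z⁻¹ * x)) := by
              ring
    · have : Tendsto (fun x : ℝ => x * Real.exp (-z⁻¹ * x)) (𝓝[Set.Ici 0] 0) (𝓝 0) := by
        have hc2 : Continuous fun x : ℝ => x * Real.exp (-z⁻¹ * x) := by continuity
        have := (hc2.tendsto 0).mono_left (nhdsWithin_le_nhds (s := Set.Ici 0))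
        simpa using this
      simpa using this.const_mul (z * ((2:ℕ).factorial : ℝ) * (z / c) ^ 2)
  have hderiv : ∀ x ∈ Set.Ioi (0:ℝ), HasDerivAt φ (φ' x) x := by
    intro x hx
    have hx' : (0:ℝ) < x := hx
    have h1 : HasDerivAt (fun x : ℝ => z / x) ((0 * x - z * 1) / x ^ 2) x :=
      (hasDerivAt_const x z).div (hasDerivAt_id x) (ne_of_gt hx')
    have h2 : HasDerivAt (fun x : ℝ => -(x + c / x) / z)
        (-(1 + (0 * x - c * 1) / x ^ 2) / z) x :=
      (((hasDerivAt_id x).add ((hasDerivAt_const x c).div (hasDerivAt_id x)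
        (ne_of_gt hx'))).neg).div_const z
    have h3 := h1.mul h2.exp
    refine h3.congr_deriv ?_
    rw [hφ']
    field_simp
    ring
  have hint : IntegrableOn φ' (Set.Ioi 0) := cp1_int_phi' hz hc
  have htop : Tendsto φ atTop (𝓝 0) := by
    apply squeeze_zero' (g := fun x => z * Real.exp (-z⁻¹ * x))
    · filter_upwards [eventually_ge_atTop (1:ℝ)] with x hx
      exact mul_nonneg (div_nonneg hz.le (by linarith)) (Real.exp_pos _).le
    · filter_upwards [eventually_ge_atTop (1:ℝ)] with x hx
      have hx' : (0:ℝ) < x := by linarith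
      have h1 : z / x ≤ z := by
        rw [div_le_iff₀ hx']; nlinarith
      have h2 : Real.exp (-(x + c / x) / z) ≤ Real.exp (-z⁻¹ * x) := by
        apply Real.exp_le_exp.2
        rw [neg_div, neg_mul, neg_le_neg_iff, le_div_iff₀ hz]
        have he : z⁻¹ * x * z = x := by field_simp
        rw [he]
        have : 0 ≤ c / x := by positivity
        linarith
      calc φ x ≤ z * Real.exp (-(x + c / x) / z) :=
            mul_le_mul_of_nonneg_right h1 (Real.exp_pos _).le
        _ ≤ z * Real.exp (-z⁻¹ * x) := mul_le_mul_of_nonneg_left h2 hz.le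
    · have hlin : Tendsto (fun x : ℝ => -z⁻¹ * x) atTop atBot :=
        Tendsto.const_mul_atTop_of_neg (by simp [hz] : -z⁻¹ < (0:ℝ)) tendsto_id
      have := (Real.tendsto_exp_atBot.comp hlin).const_mul z
      simpa using this
  have := integral_Ioi_of_hasDerivAt_of_tendsto hcont hderiv hint htop
  rw [hφ0, sub_zero] at this
  exact this

/-- The oscillating integral `𝒥(t) = ∫_0^∞ e^{-(x + Qe^t/x)/z} dx/x` of the mirror
superpotential of ℂP¹ is twice differentiable and satisfies the small quantum
differential equation `z² 𝒥'' = Qe^t 𝒥`. -/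
theorem cp1_oscillating_integral_quantum_ode (Q z : ℝ) (hQ : 0 < Q) (hz : 0 < z) :
    let J : ℝ → ℝ := fun t =>
      ∫ x in Set.Ioi (0 : ℝ), Real.exp (-(x + Q * Real.exp t / x) / z) / x
    (∀ t : ℝ, DifferentiableAt ℝ J t) ∧
    (∀ t : ℝ, DifferentiableAt ℝ (deriv J) t) ∧
    (∀ t : ℝ, z ^ 2 * deriv (deriv J) t = Q * Real.exp t * J t) := by
  intro J
  set J1 : ℝ → ℝ := fun t => ∫ x in Set.Ioi (0:ℝ), -(Q * Real.exp t / (z * x)) *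
    (Real.exp (-(x + Q * Real.exp t / x) / z) / x) with hJ1def
  set J2 : ℝ → ℝ := fun t => ∫ x in Set.Ioi (0:ℝ),
    ((Q * Real.exp t / (z * x)) ^ 2 - Q * Real.exp t / (z * x)) *
      (Real.exp (-(x + Q * Real.exp t / x) / z) / x) with hJ2def
  have hstep1 : ∀ t, HasDerivAt J (J1 t) t := fun t => (cp1_step1 Q z hQ hz t).2
  have hderivJ : deriv J = J1 := funext fun t => (hstep1 t).deriv
  have hstep2 : ∀ t, HasDerivAt J1 (J2 t) t := fun t => cp1_step2 Q z hQ hz t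
  refine ⟨fun t => (hstep1 t).differentiableAt, ?_, ?_⟩
  · intro t; rw [hderivJ]; exact (hstep2 t).differentiableAt
  · intro t
    rw [hderivJ, (hstep2 t).deriv]
    set c := Q * Real.exp t with hcdef
    have hc : 0 < c := by positivity
    have key := cp1_ibp hz hc
    calc z ^ 2 * J2 t
        = ∫ x in Set.Ioi (0:ℝ), z ^ 2 * (((c / (z * x)) ^ 2 - c / (z * x)) *
            (Real.exp (-(x + c / x) / z) / x)) := (integral_const_mul _ _).symm
      _ = ∫ x in Set.Ioi (0:ℝ), (c * ((c / x ^ 3 - z / x ^ 2 - 1 / x) *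
            Real.exp (-(x + c / x) / z)) + c * (Real.exp (-(x + c / x) / z) / x ^ 1)) := by
          apply setIntegral_congr_fun measurableSet_Ioi
          intro x hx
          have hx' : (0:ℝ) < x := hx
          field_simp
          ring
      _ = c * J t := by
          rw [integral_add ((cp1_int_phi' hz hc).const_mul c)
            ((cp1_int 1 hz hc).const_mul c), integral_const_mul, integral_const_mul, key,
            mul_zero, zero_add]
          simp only [pow_one]
          rfl
end

section
/- Let Q > 0 be real and define I(t, z) = ∫_0^{∞} e^{−(x + Qe^t/x)/z} dx/x for t ∈ ℝ and z > 0. Then I satisfies the scaling identity I(t, z) = I(t − 2s, e^{−s} z) for all s ∈ ℝ; equivalently, I is differentiable in (t,z) and z·∂I/∂z + 2·∂I/∂t = 0. Consequently 𝒥(t,z) = (2πz)^{−1/2} I(t,z) satisfies (z∂_z + 2∂_t)𝒥 = −(1/2)𝒥. -/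
/-!
Substituting `x = √(Q eᵗ) u` turns `I(t, z)` into `G(√Q e^{t/2} / z)`, where
`G(a) = ∫₀^∞ e^{-a(u + 1/u)} du/u`. Hence `I` depends on `(t, z)` only through `e^{t/2}/z`, which
is invariant under `(t, z) ↦ (t - 2s, e^{-s} z)` and killed by `z∂_z + 2∂_t`. The only analytic
input is differentiability of `G` on `(0, ∞)`, by differentiation under the integral sign with
the domination `v e^{-cv} ≤ 1/c`. The factor `(2πz)^{-1/2}` is homogeneous of degree `-1/2`
in `z`, which gives the eigenvalue `-1/2` for `𝒥`.
-/

open MeasureTheory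

namespace CP1Oscillating

open Real Set Filter Metric Topology

lemma mul_exp_neg_mul_le_inv {c : ℝ} (hc : 0 < c) (v : ℝ) : v * exp (-(c * v)) ≤ c⁻¹ :=
  calc v * exp (-(c * v)) = c⁻¹ * (c * v * exp (-(c * v))) := by field_simp
    _ ≤ c⁻¹ * 1 := by
      gcongr
      exact (mul_exp_neg_le_exp_neg_one _).trans (exp_le_one_iff.mpr (by norm_num))
    _ = c⁻¹ := mul_one _

theorem hasDerivAt_integral_exp_neg_mul {α : Type*} [MeasurableSpace α] {μ : Measure α}
    {φ w : α → ℝ} (hφ_meas : AEStronglyMeasurable φ μ) (hφ : ∀ᵐ u ∂μ, 0 ≤ φ u)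
    (hint : ∀ b > 0, Integrable (fun u => exp (-(b * φ u)) * w u) μ) {a : ℝ} (ha : 0 < a) :
    HasDerivAt (fun b => ∫ u, exp (-(b * φ u)) * w u ∂μ)
      (∫ u, -φ u * (exp (-(a * φ u)) * w u) ∂μ) a := by
  have hbound : ∀ᵐ u ∂μ, ∀ b ∈ ball a (a / 2),
      ‖-φ u * (exp (-(b * φ u)) * w u)‖ ≤ 4 / a * ‖exp (-(a / 4 * φ u)) * w u‖ := by
    filter_upwards [hφ] with u hu b hb
    have hab : a / 2 < b := by linarith [(abs_lt.mp (mem_ball_iff_norm.mp hb)).1]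
    calc ‖-φ u * (exp (-(b * φ u)) * w u)‖ = φ u * exp (-(b * φ u)) * ‖w u‖ := by
          rw [norm_mul, norm_mul, norm_neg, norm_of_nonneg hu, norm_of_nonneg (exp_pos _).le,
            mul_assoc]
      _ ≤ φ u * exp (-(a / 2 * φ u)) * ‖w u‖ := by gcongr
      _ = φ u * exp (-(a / 4 * φ u)) * (exp (-(a / 4 * φ u)) * ‖w u‖) := by
          rw [show -(a / 2 * φ u) = -(a / 4 * φ u) + -(a / 4 * φ u) by ring, exp_add]; ring
      _ ≤ (a / 4)⁻¹ * (exp (-(a / 4 * φ u)) * ‖w u‖) := by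
          gcongr; exact mul_exp_neg_mul_le_inv (by positivity) _
      _ = 4 / a * ‖exp (-(a / 4 * φ u)) * w u‖ := by
          rw [norm_mul, norm_of_nonneg (exp_pos _).le, inv_div]
  have hdiff : ∀ᵐ u ∂μ, ∀ b ∈ ball a (a / 2), HasDerivAt (fun b => exp (-(b * φ u)) * w u)
      (-φ u * (exp (-(b * φ u)) * w u)) b := by
    refine ae_of_all _ fun u b _ =>
      ((((hasDerivAt_id' b).mul_const (φ u)).fun_neg.exp).mul_const (w u)).congr_deriv (by ring)
  have hmeas : ∀ᶠ b in 𝓝 a, AEStronglyMeasurable (fun u => exp (-(b * φ u)) * w u) μ :=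
    (lt_mem_nhds ha).mono fun b hb => (hint b hb).aestronglyMeasurable
  exact (hasDerivAt_integral_of_dominated_loc_of_deriv_le (ball_mem_nhds a (half_pos ha)) hmeas
    (hint a ha) (hφ_meas.neg.mul (hint a ha).aestronglyMeasurable) hbound
    ((hint (a / 4) (by positivity)).norm.const_mul _) hdiff).2

/-- `besselK0Integral a = 2 K₀(2a)`, with `K₀` the modified Bessel function of the second kind. -/
noncomputable def besselK0Integral (a : ℝ) : ℝ :=
  ∫ u in Ioi (0 : ℝ), exp (-(a * (u + u⁻¹))) * u⁻¹

lemma integrableOn_exp_neg_mul_add_inv_mul_inv {a : ℝ} (ha : 0 < a) :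
    IntegrableOn (fun u => exp (-(a * (u + u⁻¹))) * u⁻¹) (Ioi 0) := by
  refine Integrable.mono' ((exp_neg_integrableOn_Ioi 0 ha).const_mul a⁻¹)
    (by fun_prop : Measurable _).aestronglyMeasurable ?_
  filter_upwards [ae_restrict_mem measurableSet_Ioi] with u (hu : 0 < u)
  calc ‖exp (-(a * (u + u⁻¹))) * u⁻¹‖ = exp (-a * u) * (u⁻¹ * exp (-(a * u⁻¹))) := by
        rw [norm_of_nonneg (by positivity), mul_add, neg_add, exp_add, neg_mul]; ring
    _ ≤ exp (-a * u) * a⁻¹ := by gcongr; exact mul_exp_neg_mul_le_inv ha _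
    _ = a⁻¹ * exp (-a * u) := mul_comm _ _

lemma differentiableAt_besselK0Integral {a : ℝ} (ha : 0 < a) :
    DifferentiableAt ℝ besselK0Integral a := by
  have hφ : ∀ᵐ u ∂(volume.restrict (Ioi (0 : ℝ))), 0 ≤ u + u⁻¹ :=
    (ae_restrict_mem measurableSet_Ioi).mono fun u (hu : 0 < u) => by positivity
  exact (hasDerivAt_integral_exp_neg_mul (by fun_prop) hφ
    (fun b hb => integrableOn_exp_neg_mul_add_inv_mul_inv hb) ha).differentiableAt

lemma integral_exp_neg_add_div_div_eq_besselK0Integral {q : ℝ} (hq : 0 < q) (z : ℝ) :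
    ∫ x in Ioi (0 : ℝ), exp (-(x + q / x) / z) / x = besselK0Integral (√q / z) := by
  have hc : 0 < √q := sqrt_pos.mpr hq
  have hsubst := integral_comp_mul_left_Ioi' (fun x => exp (-(x + q / x) / z) / x) 0 hc
  rw [mul_zero] at hsubst
  rw [← hsubst, besselK0Integral, smul_eq_mul, ← integral_const_mul]
  refine setIntegral_congr_fun measurableSet_Ioi fun u (hu : 0 < u) => ?_
  have hexp : -(√q * u + q / (√q * u)) / z = -(√q / z * (u + u⁻¹)) := by
    have hq' : q / (√q * u) = √q * u⁻¹ :=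
      calc q / (√q * u) = √q * √q / (√q * u) := by rw [mul_self_sqrt hq.le]
        _ = √q * u⁻¹ := by field_simp
    rw [hq']; ring
  simp only [hexp]
  field_simp

noncomputable def oscillatingIntegral (Q t z : ℝ) : ℝ :=
  ∫ x in Ioi (0 : ℝ), exp (-(x + Q * exp t / x) / z) / x

lemma oscillatingIntegral_eq_besselK0Integral {Q : ℝ} (hQ : 0 < Q) (t z : ℝ) :
    oscillatingIntegral Q t z = besselK0Integral (√Q * exp (t / 2) / z) := by
  rw [oscillatingIntegral, integral_exp_neg_add_div_div_eq_besselK0Integral (by positivity),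
    sqrt_mul hQ.le, exp_half]

lemma oscillatingIntegral_scaling {Q : ℝ} (hQ : 0 < Q) (t s z : ℝ) :
    oscillatingIntegral Q t z = oscillatingIntegral Q (t - 2 * s) (exp (-s) * z) := by
  simp only [oscillatingIntegral_eq_besselK0Integral hQ]
  rw [show (t - 2 * s) / 2 = t / 2 + -s by ring, exp_add, ← mul_assoc, mul_comm (exp (-s)) z,
    mul_div_mul_right _ _ (exp_ne_zero _)]

lemma hasDerivAt_oscillatingIntegral_t {Q z : ℝ} (hQ : 0 < Q) (hz : 0 < z) (t : ℝ) :
    HasDerivAt (fun t' => oscillatingIntegral Q t' z)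
      (deriv besselK0Integral (√Q * exp (t / 2) / z) * (√Q * exp (t / 2) / z / 2)) t := by
  simp only [oscillatingIntegral_eq_besselK0Integral hQ]
  refine (differentiableAt_besselK0Integral (by positivity)).hasDerivAt.comp t ?_
  convert (((hasDerivAt_id' t).div_const 2).exp.const_mul √Q).div_const z using 1
  ring

lemma hasDerivAt_oscillatingIntegral_z {Q z : ℝ} (hQ : 0 < Q) (hz : 0 < z) (t : ℝ) :
    HasDerivAt (fun z' => oscillatingIntegral Q t z')
      (deriv besselK0Integral (√Q * exp (t / 2) / z) * -(√Q * exp (t / 2) / z / z)) z := by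
  simp only [oscillatingIntegral_eq_besselK0Integral hQ]
  refine (differentiableAt_besselK0Integral (by positivity)).hasDerivAt.comp z ?_
  convert (hasDerivAt_const z (√Q * exp (t / 2))).fun_div (hasDerivAt_id' z) hz.ne' using 1
  field_simp
  ring

lemma exists_hasDerivAt_oscillatingIntegral_euler {Q z : ℝ} (hQ : 0 < Q) (hz : 0 < z)
    (t : ℝ) : ∃ dT dZ, HasDerivAt (fun t' => oscillatingIntegral Q t' z) dT t ∧
      HasDerivAt (fun z' => oscillatingIntegral Q t z') dZ z ∧ z * dZ + 2 * dT = 0 :=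
  ⟨_, _, hasDerivAt_oscillatingIntegral_t hQ hz t, hasDerivAt_oscillatingIntegral_z hQ hz t,
    by field_simp; ring⟩

lemma euler_operator_div_sqrt {F : ℝ → ℝ → ℝ} {k w t z dT dZ : ℝ} (hk : 0 < k) (hz : 0 < z)
    (hT : HasDerivAt (fun t' => F t' z) dT t) (hZ : HasDerivAt (fun z' => F t z') dZ z)
    (h : z * dZ + w * dT = 0) :
    z * deriv (fun z' => F t z' / √(k * z')) z + w * deriv (fun t' => F t' z / √(k * z)) t
      = -(1 / 2) * (F t z / √(k * z)) := by
  have hkz : 0 < k * z := mul_pos hk hz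
  have hs : HasDerivAt (fun z' => √(k * z')) (k / (2 * √(k * z))) z := by
    convert ((hasDerivAt_id' z).const_mul k).sqrt hkz.ne' using 1; rw [mul_one]
  have hs0 : √(k * z) ≠ 0 := (sqrt_pos.mpr hkz).ne'
  rw [(hZ.fun_div hs hs0).deriv, (hT.div_const _).deriv]
  set s := √(k * z)
  have hs2 : s ^ 2 = k * z := sq_sqrt hkz.le
  field_simp
  linear_combination (2 * s ^ 2) * h + F t z * hs2

end CP1Oscillating

/-- Homogeneity of the oscillating integral `I(t,z) = ∫_0^∞ e^{-(x + Qe^t/x)/z} dx/x`: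
it satisfies the scaling identity `I(t,z) = I(t-2s, e^{-s}z)`, equivalently it is
differentiable in each variable and `z ∂_z I + 2 ∂_t I = 0`; consequently the
normalized oscillating integral `𝒥 = (2πz)^{-1/2} I` satisfies
`(z∂_z + 2∂_t)𝒥 = -(1/2)𝒥`. -/
theorem cp1_oscillating_integral_homogeneity (Q : ℝ) (hQ : 0 < Q) :
    let I : ℝ → ℝ → ℝ := fun t z =>
      ∫ x in Set.Ioi (0 : ℝ), Real.exp (-(x + Q * Real.exp t / x) / z) / x
    let J : ℝ → ℝ → ℝ := fun t z => I t z / Real.sqrt (2 * Real.pi * z)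
    (∀ t s : ℝ, ∀ z > (0 : ℝ), I t z = I (t - 2 * s) (Real.exp (-s) * z)) ∧
    (∀ t : ℝ, ∀ z > (0 : ℝ),
      DifferentiableAt ℝ (fun t' => I t' z) t ∧ DifferentiableAt ℝ (fun z' => I t z') z ∧
      z * deriv (fun z' => I t z') z + 2 * deriv (fun t' => I t' z) t = 0) ∧
    (∀ t : ℝ, ∀ z > (0 : ℝ),
      z * deriv (fun z' => J t z') z + 2 * deriv (fun t' => J t' z) t
        = -(1 / 2) * J t z) := by
  intro I J
  refine ⟨fun t s z _ => CP1Oscillating.oscillatingIntegral_scaling hQ t s z,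
    fun t z hz => ?_, fun t z hz => ?_⟩
  all_goals obtain ⟨dT, dZ, hT, hZ, hEuler⟩ :=
    CP1Oscillating.exists_hasDerivAt_oscillatingIntegral_euler hQ hz t
  · rw [← hT.deriv, ← hZ.deriv] at hEuler
    exact ⟨hT.differentiableAt, hZ.differentiableAt, hEuler⟩
  · exact CP1Oscillating.euler_operator_div_sqrt Real.two_pi_pos hz hT hZ hEuler
end

section
/- Let Q > 0 be real. For t ∈ ℝ and real λ > 2√(Qe^t), let x₋(λ,t) = (λ − √(λ² − 4Qe^t))/2 and x₊(λ,t) = (λ + √(λ² − 4Qe^t))/2, and for an integer k ≥ 2 define the period integral ℐ_k(λ, t) = ∫_{x₋(λ,t)}^{x₊(λ,t)} (λ − x − Qe^t/x)^{k}/k! · dx/x. Then ℐ_k is twice continuously differentiable in (λ, t) on the region {λ > 2√(Qe^t)} and satisfies ∂²ℐ_k/∂t² = Qe^t · ∂²ℐ_k/∂λ². -/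
/-!
With `c = Qe^t`, the substitution `x = e^{t/2} y` gives `ℐ_k(λ, t) = e^{kt/2} ℐ_k(λe^{-t/2}, 0)`,
so the `t`-derivatives of `ℐ_k` are combinations of its `λ`-derivatives, and `∂_λ ℐ_{j+1} = ℐ_j`.
The latter is differentiation under the integral sign after extending the integrand by zero
outside the thimble: `λ ↦ (λ - x - c/x)₊^{j+1}/(j+1)!` is locally Lipschitz, and differentiable
unless `x` is an endpoint of the thimble. The PDE then reduces to the recurrence
`(λ² - 4c) ℐ_n - (2n+3) λ ℐ_{n+1} + (n+2)² ℐ_{n+2} = 0`, whose integrand is the derivative of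
`(c/x - x) (λ - x - c/x)^{n+1}/(n+1)!`, a function vanishing at both endpoints of the thimble.
-/

open intervalIntegral Real Set Filter Topology MeasureTheory
open scoped Nat

noncomputable section

def thimbleLeft (c lam : ℝ) : ℝ := (lam - √(lam ^ 2 - 4 * c)) / 2

def thimbleRight (c lam : ℝ) : ℝ := (lam + √(lam ^ 2 - 4 * c)) / 2

def periodIntegrand (c : ℝ) (j : ℕ) (lam x : ℝ) : ℝ := (lam - x - c / x) ^ j / j ! / x

/-- `periodIntegral (Q * exp t) k lam` is `ℐ_k(λ, t)`. -/
def periodIntegral (c : ℝ) (j : ℕ) (lam : ℝ) : ℝ :=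
  ∫ x in thimbleLeft c lam..thimbleRight c lam, periodIntegrand c j lam x

def rampPow (j : ℕ) (w : ℝ) : ℝ := if 0 ≤ w then w ^ j / j ! else 0

end

lemma contDiffOn_of_hasDerivAt_succ {F : ℕ → ℝ → ℝ} {U : Set ℝ} (hU : IsOpen U)
    (hF₀ : ContinuousOn (F 0) U) (hF : ∀ j, ∀ x ∈ U, HasDerivAt (F (j + 1)) (F j x) x) (m : ℕ) :
    ContDiffOn ℝ m (F m) U := by
  induction m with
  | zero => exact contDiffOn_zero.2 hF₀
  | succ m ih =>
    rw [Nat.cast_succ, contDiffOn_succ_iff_deriv_of_isOpen hU]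
    exact ⟨fun x hx => (hF m x hx).differentiableAt.differentiableWithinAt, by simp,
      ih.congr fun x hx => (hF m x hx).deriv⟩

lemma deriv_deriv_eq_of_eventually_hasDerivAt {𝕜 E : Type*} [NontriviallyNormedField 𝕜]
    [NormedAddCommGroup E] [NormedSpace 𝕜 E] {f f' : 𝕜 → E} {x : 𝕜} {a : E}
    (hf : ∀ᶠ y in 𝓝 x, HasDerivAt f (f' y) y) (hf' : HasDerivAt f' a x) :
    deriv (deriv f) x = a := by
  rw [Filter.EventuallyEq.deriv_eq (f := f') (hf.mono fun y hy => hy.deriv), hf'.deriv]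

section Thimble

variable {c lam x : ℝ}

lemma thimbleLeft_le_thimbleRight : thimbleLeft c lam ≤ thimbleRight c lam := by
  unfold thimbleLeft thimbleRight
  linarith [sqrt_nonneg (lam ^ 2 - 4 * c)]

lemma continuous_thimbleLeft : Continuous (thimbleLeft c) := by
  unfold thimbleLeft; fun_prop

lemma continuous_thimbleRight : Continuous (thimbleRight c) := by
  unfold thimbleRight; fun_prop

lemma mul_sub_sub_div_eq (h : 4 * c ≤ lam ^ 2) (hx : x ≠ 0) :
    x * (lam - x - c / x) = -((x - thimbleLeft c lam) * (x - thimbleRight c lam)) := by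
  have hsq := sq_sqrt (sub_nonneg.2 h)
  unfold thimbleLeft thimbleRight
  generalize √(lam ^ 2 - 4 * c) = r at hsq
  field_simp
  linear_combination -hsq

lemma sub_sub_div_eq_zero_iff (h : 4 * c ≤ lam ^ 2) (hx : x ≠ 0) :
    lam - x - c / x = 0 ↔ x = thimbleLeft c lam ∨ x = thimbleRight c lam := by
  rw [← mul_eq_zero_iff_left hx, mul_sub_sub_div_eq h hx, neg_eq_zero, mul_eq_zero, sub_eq_zero,
    sub_eq_zero]

lemma sub_sub_div_nonneg_iff (h : 4 * c ≤ lam ^ 2) (hx : 0 < x) :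
    0 ≤ lam - x - c / x ↔ x ∈ Icc (thimbleLeft c lam) (thimbleRight c lam) := by
  have hle : thimbleLeft c lam ≤ thimbleRight c lam := thimbleLeft_le_thimbleRight
  rw [← mul_nonneg_iff_of_pos_left hx, mul_sub_sub_div_eq h hx.ne', neg_nonneg, mul_nonpos_iff,
    mem_Icc]
  constructor
  · rintro (⟨h₁, h₂⟩ | ⟨h₁, h₂⟩) <;> constructor <;> linarith
  · rintro ⟨h₁, h₂⟩
    exact Or.inl ⟨by linarith, by linarith⟩

lemma mem_Ioo_of_sub_sub_div_nonneg (hc : 0 < c) (hx : 0 < x) (hw : 0 ≤ lam - x - c / x) :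
    x ∈ Ioo (c / lam) lam := by
  have hcx : 0 < c / x := div_pos hc hx
  have hlam : 0 < lam := by linarith
  refine ⟨(div_lt_iff₀ hlam).2 ?_, by linarith⟩
  rw [mul_comm]
  exact (div_lt_iff₀ hx).1 (by linarith)

lemma four_mul_lt_sq (h : 2 * √c < lam) : 4 * c < lam ^ 2 := by
  rcases lt_or_ge c 0 with hc | hc
  · nlinarith [sq_nonneg lam]
  · nlinarith [sq_sqrt hc, sqrt_nonneg c]

lemma thimbleLeft_pos (hc : 0 < c) (h : 2 * √c < lam) : 0 < thimbleLeft c lam := by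
  have hlam : 0 < lam := lt_of_le_of_lt (by positivity) h
  have : √(lam ^ 2 - 4 * c) < lam := (sqrt_lt' hlam).2 (by linarith)
  unfold thimbleLeft
  linarith

lemma thimble_subset_Ioo (hc : 0 < c) (h : 2 * √c < lam) :
    Icc (thimbleLeft c lam) (thimbleRight c lam) ⊆ Ioo (c / lam) lam := fun x hx =>
  have hx0 : 0 < x := (thimbleLeft_pos hc h).trans_le hx.1
  mem_Ioo_of_sub_sub_div_nonneg hc hx0 ((sub_sub_div_nonneg_iff (four_mul_lt_sq h).le hx0).2 hx)

end Thimble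

section RampPow

lemma rampPow_succ (j : ℕ) (w : ℝ) : rampPow (j + 1) w = max w 0 ^ (j + 1) / (j + 1)! := by
  unfold rampPow
  split_ifs with hw
  · rw [max_eq_left hw]
  · simp [max_eq_right (not_le.1 hw).le]

variable {j : ℕ}

@[fun_prop]
lemma measurable_rampPow : Measurable (rampPow j) :=
  Measurable.ite measurableSet_Ici (by fun_prop) measurable_const

@[fun_prop]
lemma continuous_rampPow_succ : Continuous (rampPow (j + 1)) := by
  rw [funext (rampPow_succ j)]
  fun_prop

lemma hasDerivAt_rampPow_succ {w : ℝ} (hw : w ≠ 0) :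
    HasDerivAt (rampPow (j + 1)) (rampPow j w) w := by
  rcases hw.lt_or_gt with hw | hw
  · have hzero : rampPow (j + 1) =ᶠ[𝓝 w] fun _ => 0 := by
      filter_upwards [eventually_lt_nhds hw] with v hv
      simp [rampPow, not_le.2 hv]
    rw [show rampPow j w = 0 by simp [rampPow, not_le.2 hw]]
    exact (hasDerivAt_const w 0).congr_of_eventuallyEq hzero
  · have hpow : rampPow (j + 1) =ᶠ[𝓝 w] fun v => v ^ (j + 1) / (j + 1)! := by
      filter_upwards [eventually_gt_nhds hw] with v hv
      simp [rampPow, hv.le]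
    rw [show rampPow j w = w ^ j / (j ! : ℝ) by simp [rampPow, hw.le]]
    refine (((hasDerivAt_pow (j + 1) w).div_const _).congr_of_eventuallyEq hpow).congr_deriv ?_
    rw [Nat.factorial_succ]
    push_cast
    field_simp

lemma abs_rampPow_succ_sub_le {M u v : ℝ} (hM : 0 ≤ M) (hu : u ≤ M) (hv : v ≤ M) :
    |rampPow (j + 1) u - rampPow (j + 1) v| ≤ M ^ j / j ! * |u - v| := by
  have hmax : max |max u 0| |max v 0| ≤ M := by
    rw [abs_of_nonneg (le_max_right u 0), abs_of_nonneg (le_max_right v 0)]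
    exact max_le (max_le hu hM) (max_le hv hM)
  have hpow := abs_pow_sub_pow_le (max u 0) (max v 0) (j + 1)
  rw [Nat.add_sub_cancel] at hpow
  rw [rampPow_succ, rampPow_succ, ← sub_div, abs_div,
    abs_of_pos (by positivity : (0 : ℝ) < (j + 1)!)]
  calc |max u 0 ^ (j + 1) - max v 0 ^ (j + 1)| / (j + 1)!
      ≤ |u - v| * (j + 1 : ℕ) * M ^ j / (j + 1)! := by
        gcongr
        refine hpow.trans (mul_le_mul (mul_le_mul_of_nonneg_right (abs_max_sub_max_le_abs u v 0)
          (by positivity)) (pow_le_pow_left₀ (by positivity) hmax j) (by positivity)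
          (by positivity))
    _ = M ^ j / j ! * |u - v| := by
        rw [Nat.factorial_succ]
        push_cast
        field_simp

end RampPow

section PeriodIntegral

variable {c lam : ℝ}

lemma continuousOn_periodIntegrand (j : ℕ) : ContinuousOn (periodIntegrand c j lam) (Ioi 0) := by
  intro x hx
  have hx0 : x ≠ 0 := ne_of_gt hx
  unfold periodIntegrand
  exact (by fun_prop (disch := assumption) :
    ContinuousAt (fun x => (lam - x - c / x) ^ j / j ! / x) x).continuousWithinAt

lemma intervalIntegrable_periodIntegrand (hc : 0 < c) (h : 2 * √c < lam) (j : ℕ) :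
    IntervalIntegrable (periodIntegrand c j lam) volume (thimbleLeft c lam) (thimbleRight c lam) :=
  ContinuousOn.intervalIntegrable <| (continuousOn_periodIntegrand j).mono fun _ hx =>
    (thimbleLeft_pos hc h).trans_le (uIcc_of_le thimbleLeft_le_thimbleRight ▸ hx).1

lemma periodIntegral_eq_integral_rampPow (h : 4 * c ≤ lam ^ 2) {a b : ℝ} (ha : 0 < a)
    (hal : a < thimbleLeft c lam) (hrb : thimbleRight c lam ≤ b) (j : ℕ) :
    periodIntegral c j lam = ∫ x in a..b, rampPow j (lam - x - c / x) / x := by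
  have hle : thimbleLeft c lam ≤ thimbleRight c lam := thimbleLeft_le_thimbleRight
  have hind : EqOn (fun x => rampPow j (lam - x - c / x) / x)
      ((Icc (thimbleLeft c lam) (thimbleRight c lam)).indicator (periodIntegrand c j lam))
      (Ioc a b) := by
    intro x hx
    simp only [rampPow, indicator, periodIntegrand, ← sub_sub_div_nonneg_iff h (ha.trans hx.1)]
    split_ifs <;> simp
  rw [integral_of_le (hal.le.trans (hle.trans hrb)), setIntegral_congr_fun measurableSet_Ioc hind,
    setIntegral_indicator measurableSet_Icc, inter_eq_right.2 (Icc_subset_Ioc hal hrb),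
    integral_Icc_eq_integral_Ioc, ← integral_of_le hle, periodIntegral]

lemma periodIntegral_eq_integral_rampPow_of_lt (hc : 0 < c) (h : 2 * √c < lam) {b : ℝ}
    (hb : lam < b) (j : ℕ) :
    periodIntegral c j lam = ∫ x in c / b..b, rampPow j (lam - x - c / x) / x := by
  have hlam : 0 < lam := lt_of_le_of_lt (by positivity) h
  have hsub := thimble_subset_Ioo hc h
  have hle : thimbleLeft c lam ≤ thimbleRight c lam := thimbleLeft_le_thimbleRight
  refine periodIntegral_eq_integral_rampPow (four_mul_lt_sq h).le (div_pos hc (hlam.trans hb))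
    ?_ ?_ j
  · exact (div_lt_div_of_pos_left hc hlam hb).trans (hsub (left_mem_Icc.2 hle)).1
  · exact ((hsub (right_mem_Icc.2 hle)).2.trans hb).le

lemma lipschitzOnWith_rampPow_sub_sub_div (hc : 0 ≤ c) {a b x : ℝ} (ha : 0 < a) (hax : a ≤ x)
    (hb : 0 ≤ b) (j : ℕ) :
    LipschitzOnWith (nnabs (b ^ j / j ! / a)) (fun μ => rampPow (j + 1) (μ - x - c / x) / x)
      (Iio b) := by
  have hx : 0 < x := ha.trans_le hax
  have hcx : 0 ≤ c / x := div_nonneg hc hx.le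
  refine LipschitzOnWith.of_dist_le_mul fun μ hμ ν hν => ?_
  have hramp := abs_rampPow_succ_sub_le (j := j) hb
    (by linarith [mem_Iio.1 hμ] : μ - x - c / x ≤ b)
    (by linarith [mem_Iio.1 hν] : ν - x - c / x ≤ b)
  rw [show μ - x - c / x - (ν - x - c / x) = μ - ν by ring] at hramp
  rw [dist_eq, dist_eq, coe_nnabs, abs_of_nonneg (by positivity : 0 ≤ b ^ j / j ! / a), ← sub_div,
    abs_div, abs_of_pos hx]
  calc |rampPow (j + 1) (μ - x - c / x) - rampPow (j + 1) (ν - x - c / x)| / x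
      ≤ b ^ j / j ! * |μ - ν| / x := by gcongr
    _ ≤ b ^ j / j ! * |μ - ν| / a := by gcongr
    _ = b ^ j / j ! / a * |μ - ν| := by ring

lemma hasDerivAt_rampPow_sub_sub_div (h : 4 * c ≤ lam ^ 2) {x : ℝ} (hx : x ≠ 0)
    (hl : x ≠ thimbleLeft c lam) (hr : x ≠ thimbleRight c lam) (j : ℕ) :
    HasDerivAt (fun μ => rampPow (j + 1) (μ - x - c / x) / x)
      (rampPow j (lam - x - c / x) / x) lam := by
  have hw : lam - x - c / x ≠ 0 := by
    rw [Ne, sub_sub_div_eq_zero_iff h hx]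
    tauto
  have hcomp := (hasDerivAt_rampPow_succ (j := j) hw).comp lam
    (((hasDerivAt_id' lam).sub_const x).sub_const (c / x))
  rw [mul_one] at hcomp
  exact hcomp.div_const x

theorem hasDerivAt_periodIntegral_succ (hc : 0 < c) (h : 2 * √c < lam) (j : ℕ) :
    HasDerivAt (periodIntegral c (j + 1)) (periodIntegral c j lam) lam := by
  have hlam : 0 < lam := lt_of_le_of_lt (by positivity) h
  set b := lam + 1
  have hb : 0 < b := by linarith
  set a := c / b
  have ha : 0 < a := div_pos hc hb
  have hab : a < b := (div_lt_iff₀ hb).2 (by nlinarith [four_mul_lt_sq h])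
  have hmem : ∀ x ∈ uIoc a b, a < x := fun x hx => (uIoc_of_le hab.le ▸ hx).1
  obtain ⟨-, hderiv⟩ := hasDerivAt_integral_of_dominated_loc_of_lip (μ := volume)
    (F := fun μ x => rampPow (j + 1) (μ - x - c / x) / x)
    (F' := fun x => rampPow j (lam - x - c / x) / x) (bound := fun _ => b ^ j / j ! / a)
    (Iio_mem_nhds (lt_add_one lam))
    (Eventually.of_forall fun μ => (by fun_prop : Measurable _).aestronglyMeasurable)
    (ContinuousOn.intervalIntegrable fun x hx => by
      have : x ≠ 0 := (ha.trans_le (uIcc_of_le hab.le ▸ hx).1).ne'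
      exact (by fun_prop (disch := assumption) :
        ContinuousAt (fun x => rampPow (j + 1) (lam - x - c / x) / x) x).continuousWithinAt)
    (by fun_prop : Measurable _).aestronglyMeasurable
    (Eventually.of_forall fun x hx =>
      lipschitzOnWith_rampPow_sub_sub_div hc.le ha (hmem x hx).le hb.le j)
    intervalIntegrable_const
    (by
      filter_upwards [Measure.ae_ne volume (thimbleLeft c lam),
        Measure.ae_ne volume (thimbleRight c lam)] with x hl hr hx
      exact hasDerivAt_rampPow_sub_sub_div (four_mul_lt_sq h).le (ha.trans (hmem x hx)).ne' hl hr j)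
  rw [← periodIntegral_eq_integral_rampPow_of_lt hc h (lt_add_one lam)] at hderiv
  exact hderiv.congr_of_eventuallyEq (eventually_of_mem (Ioo_mem_nhds h (lt_add_one lam))
    fun μ hμ => periodIntegral_eq_integral_rampPow_of_lt hc hμ.1 hμ.2 (j + 1))

lemma hasDerivAt_recurrence_primitive (n : ℕ) {x : ℝ} (hx : x ≠ 0) :
    HasDerivAt (fun x => (c / x - x) * (lam - x - c / x) ^ (n + 1) / (n + 1)!)
      ((lam ^ 2 - 4 * c) * periodIntegrand c n lam x
        - (2 * n + 3) * lam * periodIntegrand c (n + 1) lam x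
        + (n + 2) ^ 2 * periodIntegrand c (n + 2) lam x) x := by
  have hdiv : HasDerivAt (fun y => c / y) (-(c * (x ^ 2)⁻¹)) x := by
    simpa only [div_eq_mul_inv, mul_neg] using (hasDerivAt_inv hx).const_mul c
  have hv : HasDerivAt (fun y => c / y - y) (-(c * (x ^ 2)⁻¹) - 1) x := hdiv.sub (hasDerivAt_id' x)
  have hw : HasDerivAt (fun y => lam - y - c / y) (-1 - -(c * (x ^ 2)⁻¹)) x :=
    ((hasDerivAt_id' x).const_sub lam).sub hdiv
  refine ((hv.mul (hw.pow (n + 1))).div_const ((n + 1)! : ℝ)).congr_deriv ?_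
  simp only [periodIntegrand, Pi.pow_apply]
  rw [Nat.factorial_succ (n + 1), Nat.factorial_succ n]
  push_cast
  generalize hw : lam - x - c / x = w
  obtain rfl : c = x * (lam - x - w) := by rw [← hw]; field_simp; ring
  field_simp
  ring

theorem periodIntegral_recurrence (hc : 0 < c) (h : 2 * √c < lam) (n : ℕ) :
    (lam ^ 2 - 4 * c) * periodIntegral c n lam - (2 * n + 3) * lam * periodIntegral c (n + 1) lam
      + (n + 2) ^ 2 * periodIntegral c (n + 2) lam = 0 := by
  have hint := intervalIntegrable_periodIntegrand hc h
  have hle : thimbleLeft c lam ≤ thimbleRight c lam := thimbleLeft_le_thimbleRight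
  have hne : ∀ x ∈ uIcc (thimbleLeft c lam) (thimbleRight c lam), x ≠ 0 := fun x hx =>
    ((thimbleLeft_pos hc h).trans_le (uIcc_of_le hle ▸ hx).1).ne'
  have hend : ∀ x ∈ uIcc (thimbleLeft c lam) (thimbleRight c lam),
      (x = thimbleLeft c lam ∨ x = thimbleRight c lam) →
      (c / x - x) * (lam - x - c / x) ^ (n + 1) / (n + 1)! = 0 := fun x hx hroot => by
    rw [(sub_sub_div_eq_zero_iff (four_mul_lt_sq h).le (hne x hx)).2 hroot]
    simp
  have hcomb := (((hint n).const_mul (lam ^ 2 - 4 * c)).sub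
    ((hint (n + 1)).const_mul ((2 * n + 3) * lam))).add ((hint (n + 2)).const_mul ((n + 2) ^ 2))
  calc _ = ∫ x in thimbleLeft c lam..thimbleRight c lam,
        ((lam ^ 2 - 4 * c) * periodIntegrand c n lam x
          - (2 * n + 3) * lam * periodIntegrand c (n + 1) lam x
          + (n + 2) ^ 2 * periodIntegrand c (n + 2) lam x) := by
        rw [integral_add (((hint n).const_mul _).sub ((hint (n + 1)).const_mul _))
            ((hint (n + 2)).const_mul _), integral_sub ((hint n).const_mul _)
            ((hint (n + 1)).const_mul _), intervalIntegral.integral_const_mul,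
          intervalIntegral.integral_const_mul, intervalIntegral.integral_const_mul]
        rfl
    _ = 0 := by
        rw [integral_eq_sub_of_hasDerivAt
          (fun x hx => hasDerivAt_recurrence_primitive n (hne x hx)) hcomb,
          hend _ right_mem_uIcc (Or.inr rfl), hend _ left_mem_uIcc (Or.inl rfl), sub_zero]

lemma periodIntegral_zero (hc : 0 < c) (h : 2 * √c < lam) :
    periodIntegral c 0 lam = log (thimbleRight c lam / thimbleLeft c lam) := by
  have hl := thimbleLeft_pos hc h
  simp only [periodIntegral, periodIntegrand, pow_zero, Nat.factorial_zero, Nat.cast_one, div_one,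
    one_div]
  exact integral_inv_of_pos hl (hl.trans_le thimbleLeft_le_thimbleRight)

lemma continuousOn_periodIntegral_zero (hc : 0 < c) :
    ContinuousOn (periodIntegral c 0) (Ioi (2 * √c)) := by
  have hl : ∀ lam ∈ Ioi (2 * √c), 0 < thimbleLeft c lam := fun _ h => thimbleLeft_pos hc h
  refine ContinuousOn.congr ?_ fun lam h => periodIntegral_zero hc h
  exact (continuous_thimbleRight.continuousOn.div continuous_thimbleLeft.continuousOn
    fun lam h => (hl lam h).ne').log
    fun lam h => (div_pos ((hl lam h).trans_le thimbleLeft_le_thimbleRight) (hl lam h)).ne'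

theorem contDiffOn_periodIntegral (hc : 0 < c) (m : ℕ) :
    ContDiffOn ℝ m (periodIntegral c m) (Ioi (2 * √c)) :=
  contDiffOn_of_hasDerivAt_succ isOpen_Ioi (continuousOn_periodIntegral_zero hc)
    (fun j _ h => hasDerivAt_periodIntegral_succ hc h j) m

theorem deriv_deriv_periodIntegral (hc : 0 < c) (h : 2 * √c < lam) (n : ℕ) :
    deriv (deriv (periodIntegral c (n + 2))) lam = periodIntegral c n lam :=
  deriv_deriv_eq_of_eventually_hasDerivAt
    (eventually_of_mem (Ioi_mem_nhds h) fun _ h' => hasDerivAt_periodIntegral_succ hc h' (n + 1))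
    (hasDerivAt_periodIntegral_succ hc h n)

end PeriodIntegral

section Scaling

theorem periodIntegral_mul_sq (c lam : ℝ) {r : ℝ} (hr : 0 < r) (j : ℕ) :
    periodIntegral (c * r ^ 2) j (r * lam) = r ^ j * periodIntegral c j lam := by
  have hroot : √((r * lam) ^ 2 - 4 * (c * r ^ 2)) = r * √(lam ^ 2 - 4 * c) := by
    rw [show (r * lam) ^ 2 - 4 * (c * r ^ 2) = r ^ 2 * (lam ^ 2 - 4 * c) by ring,
      sqrt_mul (sq_nonneg r), sqrt_sq hr.le]
  have hL : thimbleLeft (c * r ^ 2) (r * lam) = r * thimbleLeft c lam := by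
    rw [thimbleLeft, thimbleLeft, hroot]; ring
  have hR : thimbleRight (c * r ^ 2) (r * lam) = r * thimbleRight c lam := by
    rw [thimbleRight, thimbleRight, hroot]; ring
  have hpt : ∀ x, r * periodIntegrand (c * r ^ 2) j (r * lam) (r * x)
      = r ^ j * periodIntegrand c j lam x := by
    intro x
    rcases eq_or_ne x 0 with rfl | hx
    · simp [periodIntegrand]
    have hw : r * lam - r * x - c * r ^ 2 / (r * x) = r * (lam - x - c / x) := by
      field_simp
    rw [periodIntegrand, periodIntegrand, hw, mul_pow]
    field_simp
  rw [periodIntegral, hL, hR, periodIntegral, ← intervalIntegral.integral_const_mul,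
    ← mul_inv_cancel_left₀ hr.ne' (∫ x in _.._, _), ← smul_eq_mul (a := r⁻¹),
    ← intervalIntegral.integral_comp_mul_left _ hr.ne', ← intervalIntegral.integral_const_mul]
  simp only [hpt]

lemma periodIntegral_mul_exp (Q t lam : ℝ) (j : ℕ) :
    periodIntegral (Q * exp t) j lam
      = exp (t / 2) ^ j * periodIntegral Q j (lam / exp (t / 2)) := by
  have hsq : exp (t / 2) ^ 2 = exp t := by rw [sq, ← exp_add, add_halves]
  have := periodIntegral_mul_sq Q (lam / exp (t / 2)) (exp_pos (t / 2)) j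
  rwa [hsq, mul_div_cancel₀ _ (exp_pos _).ne'] at this

lemma isOpen_setOf_two_sqrt_mul_exp_lt (Q lam : ℝ) : IsOpen {t | 2 * √(Q * exp t) < lam} :=
  isOpen_lt (by fun_prop) continuous_const

variable {Q lam t : ℝ}

lemma two_sqrt_mul_exp_lt_iff (hQ : 0 ≤ Q) :
    2 * √(Q * exp t) < lam ↔ 2 * √Q < lam / exp (t / 2) := by
  rw [sqrt_mul hQ, ← exp_half, lt_div_iff₀ (exp_pos _), mul_assoc]

theorem hasDerivAt_periodIntegral_mul_exp (hQ : 0 < Q) (h : 2 * √(Q * exp t) < lam) (j : ℕ) :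
    HasDerivAt (fun t => periodIntegral (Q * exp t) (j + 1) lam)
      ((j + 1) / 2 * periodIntegral (Q * exp t) (j + 1) lam
        - lam / 2 * periodIntegral (Q * exp t) j lam) t := by
  simp only [periodIntegral_mul_exp Q _ lam]
  have hr : HasDerivAt (fun t => exp (t / 2)) (exp (t / 2) / 2) t :=
    ((hasDerivAt_id' t).div_const 2).exp.congr_deriv (by ring)
  have hs : HasDerivAt (fun t => lam / exp (t / 2)) (-(lam / exp (t / 2)) / 2) t :=
    ((hasDerivAt_const t lam).div hr (exp_pos _).ne').congr_deriv (by field_simp; ring)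
  have hI := (hasDerivAt_periodIntegral_succ hQ ((two_sqrt_mul_exp_lt_iff hQ.le).1 h) j).comp t hs
  refine ((hr.pow (j + 1)).mul hI).congr_deriv ?_
  simp only [Function.comp_apply, Pi.pow_apply]
  push_cast
  field_simp
  ring

theorem deriv_deriv_periodIntegral_mul_exp (hQ : 0 < Q) (h : 2 * √(Q * exp t) < lam) (n : ℕ) :
    deriv (deriv fun t => periodIntegral (Q * exp t) (n + 2) lam) t
      = (n + 2) ^ 2 / 4 * periodIntegral (Q * exp t) (n + 2) lam
        - (2 * n + 3) * lam / 4 * periodIntegral (Q * exp t) (n + 1) lam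
        + lam ^ 2 / 4 * periodIntegral (Q * exp t) n lam := by
  have h₁ := hasDerivAt_periodIntegral_mul_exp hQ h (n + 1)
  have h₂ := hasDerivAt_periodIntegral_mul_exp hQ h n
  refine deriv_deriv_eq_of_eventually_hasDerivAt
    (eventually_of_mem ((isOpen_setOf_two_sqrt_mul_exp_lt Q lam).mem_nhds h)
      fun _ h' => hasDerivAt_periodIntegral_mul_exp hQ h' (n + 1))
    (((h₁.const_mul _).sub (h₂.const_mul (lam / 2))).congr_deriv ?_)
  push_cast
  ring

theorem contDiffOn_periodIntegral_mul_exp (hQ : 0 < Q) (k : ℕ) :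
    ContDiffOn ℝ k (fun p : ℝ × ℝ => periodIntegral (Q * exp p.2) k p.1)
      {p : ℝ × ℝ | 2 * √(Q * exp p.2) < p.1} := by
  simp only [periodIntegral_mul_exp Q _ _ k]
  refine (by fun_prop : ContDiff ℝ k fun p : ℝ × ℝ => exp (p.2 / 2) ^ k).contDiffOn.mul
    ((contDiffOn_periodIntegral hQ k).comp
      (by fun_prop (disch := exact fun _ => (exp_pos _).ne') :
        ContDiff ℝ k fun p : ℝ × ℝ => p.1 / exp (p.2 / 2)).contDiffOn ?_)
  exact fun p hp => (two_sqrt_mul_exp_lt_iff hQ.le).1 hp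

end Scaling

/-- The period integrals
`ℐ_k(λ,t) = ∫_{x₋(λ,t)}^{x₊(λ,t)} (λ - x - Qe^t/x)^k/k! dx/x` (for `k ≥ 2`) of the
mirror superpotential of ℂP¹ are C² on the region `{λ > 2√(Qe^t)}` and satisfy
the small quantum differential equation in the form `∂²_t ℐ_k = Qe^t ∂²_λ ℐ_k`. -/
theorem cp1_period_integral_quantum_pde (Q : ℝ) (hQ : 0 < Q) (k : ℕ) (hk : 2 ≤ k) :
    let P : ℝ → ℝ → ℝ := fun lam t =>
      ∫ x in ((lam - Real.sqrt (lam ^ 2 - 4 * Q * Real.exp t)) / 2)..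
          ((lam + Real.sqrt (lam ^ 2 - 4 * Q * Real.exp t)) / 2),
        (lam - x - Q * Real.exp t / x) ^ k / (Nat.factorial k : ℝ) / x
    ContDiffOn ℝ 2 (fun p : ℝ × ℝ => P p.1 p.2)
      {p : ℝ × ℝ | 2 * Real.sqrt (Q * Real.exp p.2) < p.1} ∧
    (∀ lam t : ℝ, 2 * Real.sqrt (Q * Real.exp t) < lam →
      deriv (deriv (fun t' => P lam t')) t
        = Q * Real.exp t * deriv (deriv (fun l => P l t)) lam) := by
  intro P
  have hP : ∀ lam t, P lam t = periodIntegral (Q * exp t) k lam := fun lam t => by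
    simp only [P, periodIntegral, periodIntegrand, thimbleLeft, thimbleRight, mul_assoc]
  simp only [hP]
  refine ⟨(contDiffOn_periodIntegral_mul_exp hQ k).of_le (by exact_mod_cast hk),
    fun lam t h => ?_⟩
  obtain ⟨n, rfl⟩ : ∃ n, k = n + 2 := ⟨k - 2, by omega⟩
  rw [deriv_deriv_periodIntegral_mul_exp hQ h, deriv_deriv_periodIntegral (by positivity) h]
  linear_combination (1 / 4 : ℝ) * periodIntegral_recurrence (by positivity) h n
end

section
/- Let Q > 0 and t ∈ ℝ, write q = Qe^t, and for real λ > 2√q let x₋ = (λ − √(λ² − 4q))/2 and x₊ = (λ + √(λ² − 4q))/2. Define ℐ₁(λ, t) = ∫_{x₋}^{x₊} (λ − x − Qe^t/x) · dx/x. Then: (i) ∂ℐ₁/∂λ = log(x₊/x₋); and (ii) ∂ℐ₁/∂t = −(x₊ − x₋) = −√(λ² − 4Qe^t). -/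
/-!
The roots `x₋ ≤ x₊` of `x² - λx + q` (with `q = Qeᵗ`) satisfy `x₋ x₊ = q`, so the boundary terms
`q/x` of the antiderivative `λ log x - x + q/x` collapse and `ℐ₁ = λ log (x₊/x₋) - 2√(λ² - 4q)`.
The two derivatives of this closed form are then computed directly, using
`∂x₊/∂λ = x₊/√(λ² - 4q)`, `∂x₋/∂λ = -x₋/√(λ² - 4q)` and `∂x±/∂q = ∓1/√(λ² - 4q)`;
the `t`-derivative follows by the chain rule through `q = Qeᵗ`.
-/

open intervalIntegral Real

theorem integral_sub_sub_div_div_self {a b : ℝ} (l q : ℝ) (ha : 0 < a) (hb : 0 < b) :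
    ∫ x in a..b, (l - x - q / x) / x = l * (log b - log a) - (b - a) + (q / b - q / a) := by
  have hpos : ∀ x ∈ Set.uIcc a b, 0 < x := fun x hx => (lt_min ha hb).trans_le hx.1
  have hderiv : ∀ x ∈ Set.uIcc a b,
      HasDerivAt (fun y => l * log y - y + q / y) ((l - x - q / x) / x) x := by
    intro x hx
    have hx0 := (hpos x hx).ne'
    refine ((((hasDerivAt_log hx0).const_mul l).sub (hasDerivAt_id x)).add
      ((hasDerivAt_const x q).div (hasDerivAt_id x) hx0)).congr_deriv ?_
    simp only [id]
    field_simp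
    ring
  have hcont : ContinuousOn (fun x => (l - x - q / x) / x) (Set.uIcc a b) :=
    ContinuousOn.div (by fun_prop (disch := exact fun x hx => (hpos x hx).ne')) continuousOn_id
      fun x hx => (hpos x hx).ne'
  rw [integral_eq_sub_of_hasDerivAt hderiv hcont.intervalIntegrable]
  ring

noncomputable def rootMinus (l q : ℝ) : ℝ := (l - √(l ^ 2 - 4 * q)) / 2

noncomputable def rootPlus (l q : ℝ) : ℝ := (l + √(l ^ 2 - 4 * q)) / 2

noncomputable def firstPeriod (l q : ℝ) : ℝ :=
  l * log (rootPlus l q / rootMinus l q) - 2 * √(l ^ 2 - 4 * q)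

section

variable {l q : ℝ}

theorem rootPlus_sub_rootMinus : rootPlus l q - rootMinus l q = √(l ^ 2 - 4 * q) := by
  unfold rootPlus rootMinus; ring

theorem pos_of_two_mul_sqrt_lt (hl : 2 * √q < l) : 0 < l := by
  linarith [sqrt_nonneg q]

theorem discr_pos_of_two_mul_sqrt_lt (hl : 2 * √q < l) : 0 < l ^ 2 - 4 * q := by
  have := (sqrt_lt' (half_pos (pos_of_two_mul_sqrt_lt hl))).1 (by linarith : √q < l / 2)
  linarith

theorem rootMinus_mul_rootPlus (hd : 0 ≤ l ^ 2 - 4 * q) : rootMinus l q * rootPlus l q = q := by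
  unfold rootMinus rootPlus
  linear_combination (-1 / 4 : ℝ) * sq_sqrt hd

theorem rootMinus_pos (hq : 0 < q) (hl : 2 * √q < l) : 0 < rootMinus l q := by
  have : √(l ^ 2 - 4 * q) < l := (sqrt_lt' (pos_of_two_mul_sqrt_lt hl)).2 (by linarith)
  unfold rootMinus; linarith

theorem rootMinus_le_rootPlus : rootMinus l q ≤ rootPlus l q := by
  linarith [rootPlus_sub_rootMinus (l := l) (q := q), sqrt_nonneg (l ^ 2 - 4 * q)]

theorem integral_rootMinus_rootPlus (hq : 0 < q) (hl : 2 * √q < l) :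
    ∫ x in rootMinus l q..rootPlus l q, (l - x - q / x) / x = firstPeriod l q := by
  have hm := rootMinus_pos hq hl
  have hp := hm.trans_le rootMinus_le_rootPlus
  have hprod := rootMinus_mul_rootPlus (discr_pos_of_two_mul_sqrt_lt hl).le
  rw [integral_sub_sub_div_div_self l q hm hp, firstPeriod, log_div hp.ne' hm.ne',
    ← rootPlus_sub_rootMinus, (div_eq_iff hp.ne').2 hprod.symm,
    (div_eq_iff hm.ne').2 (hprod.symm.trans (mul_comm _ _))]
  ring

theorem hasDerivAt_sqrt_discr_left (hd : l ^ 2 - 4 * q ≠ 0) :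
    HasDerivAt (fun l => √(l ^ 2 - 4 * q)) (l / √(l ^ 2 - 4 * q)) l := by
  refine (((hasDerivAt_pow 2 l).sub_const (4 * q)).sqrt hd).congr_deriv ?_
  field_simp
  ring

theorem hasDerivAt_sqrt_discr_right (hd : l ^ 2 - 4 * q ≠ 0) :
    HasDerivAt (fun q => √(l ^ 2 - 4 * q)) (-2 / √(l ^ 2 - 4 * q)) q := by
  refine ((((hasDerivAt_id q).const_mul 4).const_sub (l ^ 2)).sqrt hd).congr_deriv ?_
  simp only [id]
  field_simp
  ring

theorem hasDerivAt_rootPlus_left (hd : 0 < l ^ 2 - 4 * q) :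
    HasDerivAt (fun l => rootPlus l q) (rootPlus l q / √(l ^ 2 - 4 * q)) l := by
  refine (((hasDerivAt_id l).add (hasDerivAt_sqrt_discr_left hd.ne')).div_const 2).congr_deriv ?_
  unfold rootPlus
  field_simp
  ring

theorem hasDerivAt_rootMinus_left (hd : 0 < l ^ 2 - 4 * q) :
    HasDerivAt (fun l => rootMinus l q) (-rootMinus l q / √(l ^ 2 - 4 * q)) l := by
  refine (((hasDerivAt_id l).sub (hasDerivAt_sqrt_discr_left hd.ne')).div_const 2).congr_deriv ?_
  unfold rootMinus
  field_simp
  ring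

theorem hasDerivAt_rootPlus_right (hd : l ^ 2 - 4 * q ≠ 0) :
    HasDerivAt (fun q => rootPlus l q) (-1 / √(l ^ 2 - 4 * q)) q := by
  refine (((hasDerivAt_sqrt_discr_right hd).const_add l).div_const 2).congr_deriv ?_
  ring

theorem hasDerivAt_rootMinus_right (hd : l ^ 2 - 4 * q ≠ 0) :
    HasDerivAt (fun q => rootMinus l q) (1 / √(l ^ 2 - 4 * q)) q := by
  refine (((hasDerivAt_sqrt_discr_right hd).const_sub l).div_const 2).congr_deriv ?_
  ring

theorem hasDerivAt_log_rootPlus_div_rootMinus_left (hq : 0 < q) (hl : 2 * √q < l) :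
    HasDerivAt (fun l => log (rootPlus l q / rootMinus l q)) (2 / √(l ^ 2 - 4 * q)) l := by
  have hd := discr_pos_of_two_mul_sqrt_lt hl
  have hm := rootMinus_pos hq hl
  have hp := hm.trans_le rootMinus_le_rootPlus
  refine (((hasDerivAt_rootPlus_left hd).div (hasDerivAt_rootMinus_left hd) hm.ne').log
    (div_pos hp hm).ne').congr_deriv ?_
  simp only [Pi.div_apply]
  field_simp
  ring

theorem hasDerivAt_log_rootPlus_div_rootMinus_right (hq : 0 < q) (hl : 2 * √q < l) :
    HasDerivAt (fun q => log (rootPlus l q / rootMinus l q)) (-l / (q * √(l ^ 2 - 4 * q))) q := by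
  have hd := discr_pos_of_two_mul_sqrt_lt hl
  have hm := rootMinus_pos hq hl
  have hp := hm.trans_le rootMinus_le_rootPlus
  have hprod := rootMinus_mul_rootPlus hd.le
  have hsum : rootMinus l q + rootPlus l q = l := by unfold rootMinus rootPlus; ring
  refine (((hasDerivAt_rootPlus_right hd.ne').div (hasDerivAt_rootMinus_right hd.ne')
    hm.ne').log (div_pos hp hm).ne').congr_deriv ?_
  simp only [Pi.div_apply]
  field_simp
  linear_combination l * hprod - q * hsum

theorem hasDerivAt_firstPeriod_left (hq : 0 < q) (hl : 2 * √q < l) :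
    HasDerivAt (fun l => firstPeriod l q) (log (rootPlus l q / rootMinus l q)) l := by
  have hd := discr_pos_of_two_mul_sqrt_lt hl
  refine (((hasDerivAt_id l).mul (hasDerivAt_log_rootPlus_div_rootMinus_left hq hl)).sub
    ((hasDerivAt_sqrt_discr_left hd.ne').const_mul 2)).congr_deriv ?_
  simp only [id]
  field_simp
  ring

theorem hasDerivAt_firstPeriod_right (hq : 0 < q) (hl : 2 * √q < l) :
    HasDerivAt (fun q => firstPeriod l q) (-√(l ^ 2 - 4 * q) / q) q := by
  have hd := discr_pos_of_two_mul_sqrt_lt hl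
  refine (((hasDerivAt_log_rootPlus_div_rootMinus_right hq hl).const_mul l).sub
    ((hasDerivAt_sqrt_discr_right hd.ne').const_mul 2)).congr_deriv ?_
  have hs2 := sq_sqrt hd.le
  set s := √(l ^ 2 - 4 * q)
  have hs : s ≠ 0 := (sqrt_pos.2 hd).ne'
  field_simp
  linear_combination hs2

end

/-- The first period vector of the mirror superpotential of ℂP¹: for
`ℐ₁(λ,t) = ∫_{x₋}^{x₊} (λ - x - Qe^t/x) dx/x` one has `∂ℐ₁/∂λ = log(x₊/x₋)` and
`∂ℐ₁/∂t = -(x₊ - x₋) = -√(λ² - 4Qe^t)`. -/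
theorem cp1_first_period_vector (Q : ℝ) (hQ : 0 < Q) (t lam : ℝ)
    (h : 2 * Real.sqrt (Q * Real.exp t) < lam) :
    let xm : ℝ → ℝ → ℝ := fun l t' => (l - Real.sqrt (l ^ 2 - 4 * Q * Real.exp t')) / 2
    let xp : ℝ → ℝ → ℝ := fun l t' => (l + Real.sqrt (l ^ 2 - 4 * Q * Real.exp t')) / 2
    let I1 : ℝ → ℝ → ℝ := fun l t' =>
      ∫ x in (xm l t')..(xp l t'), (l - x - Q * Real.exp t' / x) / x
    HasDerivAt (fun l => I1 l t) (Real.log (xp lam t / xm lam t)) lam ∧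
    HasDerivAt (fun t' => I1 lam t') (-(xp lam t - xm lam t)) t ∧
    xp lam t - xm lam t = Real.sqrt (lam ^ 2 - 4 * Q * Real.exp t) := by
  intro xm xp I1
  have hq : ∀ t', 0 < Q * exp t' := fun t' => mul_pos hQ (exp_pos t')
  have hxm : ∀ l t', xm l t' = rootMinus l (Q * exp t') := by simp [xm, rootMinus, mul_assoc]
  have hxp : ∀ l t', xp l t' = rootPlus l (Q * exp t') := by simp [xp, rootPlus, mul_assoc]
  have hI1 : ∀ l t', 2 * √(Q * exp t') < l → I1 l t' = firstPeriod l (Q * exp t') := by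
    intro l t' hl
    simp only [I1, hxm, hxp, integral_rootMinus_rootPlus (hq t') hl]
  have hwidth : xp lam t - xm lam t = √(lam ^ 2 - 4 * Q * exp t) := by
    rw [hxm, hxp, rootPlus_sub_rootMinus, mul_assoc]
  refine ⟨?_, ?_, hwidth⟩
  · rw [hxm, hxp]
    exact (hasDerivAt_firstPeriod_left (hq t) h).congr_of_eventuallyEq
      (by filter_upwards [eventually_gt_nhds h] with l hl using hI1 l t hl)
  · have hnear : ∀ᶠ t' in nhds t, 2 * √(Q * exp t') < lam :=
      (by fun_prop : Continuous fun t' => 2 * √(Q * exp t')).continuousAt.eventually_lt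
        continuousAt_const h
    have hcomp := (hasDerivAt_firstPeriod_right (hq t) h).comp t ((hasDerivAt_exp t).const_mul Q)
    rw [hwidth, mul_assoc]
    exact (hcomp.congr_deriv (div_mul_cancel₀ _ (hq t).ne')).congr_of_eventuallyEq
      (by filter_upwards [hnear] with t' ht' using hI1 lam t' ht')
end
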